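/- arXiv:math/0501201 — 2 statements merged into one kernel-verified Lean document; each statement's English description precedes it below -/
import Mathlib

section
/- (Bezoutian inversion formula) Let R be an N×N Hermitian positive definite matrix that is block Toeplitz with block size n1. Define the N×n1 matrices P := [p_{0,N−1}, p_{1,N−1}, …, p_{n1−1,N−1}] and Q := [q_{0,N−n1}, q_{0,N−n1+1}, …, q_{0,N−1}], partitioned into n1×n1 block rows P = [P_0; P_1; …; P_{n2−1}] and Q = [Q_{n2−1}; …; Q_1; Q_0] (block row t of P, counting from the top starting at 0, is P_t; block row t of Q is Q_{n2−1−t}). Let V' be the n1×n1 diagonal matrix with diagonal entries v'_{0,N−1}, …, v'_{n1−1,N−1} and V the n1×n1 diagonal matrix with diagonal entries v_{0,N−n1}, …, v_{0,N−1}. Let L_p be the N×N block matrix whose (s,t) block (0 ≤ s, t ≤ n2−1) is P_{t−s}ᵀ if t ≥ s and 0 otherwise, and let L_q be the N×N block matrix whose (s,t) block is Q_{n2−(t−s)}ᵀ if t > s and 0 otherwise. Let D(M) denote the N×N block diagonal matrix with the n1×n1 matrix M repeated n2 times on the diagonal. Then R⁻¹ = L_pᴴ D(V'⁻¹) L_p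 − L_qᴴ D(V⁻¹) L_q, where ᴴ denotes conjugate transpose. -/
open Matrix
open scoped ComplexOrder

noncomputable section

/-- The `k`-th standard basis vector of `ℂⁿ` (zero if `k ≥ n`). -/
def eVec (n : ℕ) (k : ℕ) : Fin n → ℂ := fun j => if (j : ℕ) = k then 1 else 0

/-- `vᵀ R w`. -/
def bform {n : ℕ} (R : Matrix (Fin n) (Fin n) ℂ) (v w : Fin n → ℂ) : ℂ :=
  v ⬝ᵥ R.mulVec w

/-- Joint recursion computing the pair `(p_{k,k+d}, q_{k,k+d})`. -/
def pqAux {n : ℕ} (R : Matrix (Fin n) (Fin n) ℂ) : ℕ → ℕ → (Fin n → ℂ) × (Fin n → ℂ)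
  | 0, k => (eVec n k, eVec n k)
  | d + 1, k =>
      let p := (pqAux R d k).1
      let q := (pqAux R d (k + 1)).2
      let l := k + d + 1
      let a := bform R p (eVec n l) / bform R q (eVec n l)
      let a' := bform R q (eVec n k) / bform R p (eVec n k)
      (p - a • q, q - a' • p)

/-- The orthogonal polynomial `p_{k,l}`. -/
def pVec {n : ℕ} (R : Matrix (Fin n) (Fin n) ℂ) (k l : ℕ) : Fin n → ℂ :=
  (pqAux R (l - k) k).1

/-- The orthogonal polynomial `q_{k,l}`. -/
def qVec {n : ℕ} (R : Matrix (Fin n) (Fin n) ℂ) (k l : ℕ) : Fin n → ℂ :=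
  (pqAux R (l - k) k).2

/-- The generalized reflection coefficient `a_{k,l}`. -/
def aCoef {n : ℕ} (R : Matrix (Fin n) (Fin n) ℂ) (k l : ℕ) : ℂ :=
  bform R (pVec R k (l - 1)) (eVec n l) / bform R (qVec R (k + 1) l) (eVec n l)

/-- The generalized reflection coefficient `a'_{k,l}`. -/
def aCoef' {n : ℕ} (R : Matrix (Fin n) (Fin n) ℂ) (k l : ℕ) : ℂ :=
  bform R (qVec R (k + 1) l) (eVec n k) / bform R (pVec R k (l - 1)) (eVec n k)

/-- `v_{k,l} = q_{k,l}ᵀ R e_l`. -/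
def vSc {n : ℕ} (R : Matrix (Fin n) (Fin n) ℂ) (k l : ℕ) : ℂ :=
  bform R (qVec R k l) (eVec n l)

/-- `v'_{k,l} = p_{k,l}ᵀ R e_k`. -/
def vSc' {n : ℕ} (R : Matrix (Fin n) (Fin n) ℂ) (k l : ℕ) : ℂ :=
  bform R (pVec R k l) (eVec n k)

/-- The `m`-th coordinate of `p_{k,l}` (zero if out of range). -/
def pCoord {n : ℕ} (R : Matrix (Fin n) (Fin n) ℂ) (k l m : ℕ) : ℂ :=
  if h : m < n then pVec R k l ⟨m, h⟩ else 0

/-- The `m`-th coordinate of `q_{k,l}` (zero if out of range). -/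
def qCoord {n : ℕ} (R : Matrix (Fin n) (Fin n) ℂ) (k l m : ℕ) : ℂ :=
  if h : m < n then qVec R k l ⟨m, h⟩ else 0

/-- Extension of an `m × m` matrix to a function on `ℕ × ℕ` (zero out of range). -/
def matExt {m : ℕ} (M : Matrix (Fin m) (Fin m) ℂ) (a b : ℕ) : ℂ :=
  if h : a < m ∧ b < m then M ⟨a, h.1⟩ ⟨b, h.2⟩ else 0

namespace BezAux

variable {N : ℕ} (R : Matrix (Fin N) (Fin N) ℂ)

lemma conj_entry (hH : Rᴴ = R) (i j : Fin N) : starRingEnd ℂ (R j i) = R i j := by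
  have h := congrFun (congrFun hH i) j
  rwa [Matrix.conjTranspose_apply, Complex.star_def] at h

lemma bform_e (v : Fin N → ℂ) (j : Fin N) : bform R v (eVec N (j:ℕ)) = ∑ i, v i * R i j := by
  simp only [bform, dotProduct, mulVec, eVec]
  refine Finset.sum_congr rfl fun i _ => ?_
  congr 1
  rw [Finset.sum_eq_single j]
  · simp
  · intro b _ hb
    simp [Fin.val_eq_val, hb]
  · simp

lemma bform_expand (v w : Fin N → ℂ) : bform R v w = ∑ j, w j * bform R v (eVec N (j:ℕ)) := by
  have : (∑ j, w j * bform R v (eVec N (j:ℕ))) = ∑ j, ∑ i, w j * (v i * R i j) := by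
    refine Finset.sum_congr rfl fun j _ => ?_
    rw [bform_e, Finset.mul_sum]
  rw [this, Finset.sum_comm]
  simp only [bform, dotProduct, mulVec, Finset.mul_sum]
  exact Finset.sum_congr rfl fun i _ => Finset.sum_congr rfl fun j _ => by ring

lemma mulVec_star_apply (hH : Rᴴ = R) (w : Fin N → ℂ) (i : Fin N) :
    R.mulVec (star w) i = starRingEnd ℂ (bform R w (eVec N (i:ℕ))) := by
  rw [bform_e, map_sum]
  simp only [mulVec, dotProduct, Pi.star_apply, Complex.star_def]
  refine Finset.sum_congr rfl fun j _ => ?_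
  rw [_root_.map_mul, conj_entry R hH i j]
  ring

lemma bform_symm (hH : Rᴴ = R) (v w : Fin N → ℂ) :
    bform R v (star w) = starRingEnd ℂ (bform R w (star v)) := by
  simp only [bform, dotProduct, mulVec, Finset.mul_sum, map_sum,
    Pi.star_apply, Complex.star_def]
  rw [Finset.sum_comm]
  refine Finset.sum_congr rfl fun i _ => Finset.sum_congr rfl fun j _ => ?_
  rw [_root_.map_mul, _root_.map_mul, Complex.conj_conj, conj_entry R hH j i]
  ring

/-- support of p and q -/
lemma pq_support (d k : ℕ) (m : Fin N) (hm : (m:ℕ) < k ∨ k + d < (m:ℕ)) :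
    (pqAux R d k).1 m = 0 ∧ (pqAux R d k).2 m = 0 := by
  induction d generalizing k with
  | zero =>
    have : (m:ℕ) ≠ k := by omega
    simp [pqAux, eVec, this]
  | succ d ih =>
    have h1 : (pqAux R d k).1 m = 0 := by
      refine (ih k ?_).1
      omega
    have h2 : (pqAux R d (k+1)).2 m = 0 := by
      refine (ih (k+1) ?_).2
      omega
    simp [pqAux, h1, h2]

lemma p_monic (d k : ℕ) (m : Fin N) (hm : (m:ℕ) = k) : (pqAux R d k).1 m = 1 := by
  induction d generalizing k with
  | zero => simp [pqAux, eVec, hm]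
  | succ d ih =>
    have h2 : (pqAux R d (k+1)).2 m = 0 := by
      refine (pq_support R d (k+1) m ?_).2
      omega
    simp [pqAux, h2, ih k hm]

lemma q_monic (d k : ℕ) (m : Fin N) (hm : (m:ℕ) = k + d) : (pqAux R d k).2 m = 1 := by
  induction d generalizing k with
  | zero => simp [pqAux, eVec, hm]
  | succ d ih =>
    have h1 : (pqAux R d k).1 m = 0 := by
      refine (pq_support R d k m ?_).1
      omega
    have : (m:ℕ) = (k+1) + d := by omega
    simp [pqAux, h1, ih (k+1) this]

end BezAux

namespace BezAux

variable {N : ℕ} (R : Matrix (Fin N) (Fin N) ℂ)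

lemma posdef_zero (hR : R.PosDef) (q : Fin N → ℂ)
    (h : ∀ j : Fin N, q j ≠ 0 → bform R q (eVec N (j:ℕ)) = 0) : q = 0 := by
  by_contra hq
  have hu : star q ≠ 0 := fun h0 => hq (by simpa using congrArg star h0)
  have hpos := hR.dotProduct_mulVec_pos hu
  have hz : star (star q) ⬝ᵥ R.mulVec (star q) = 0 := by
    rw [star_star]
    have h1 : q ⬝ᵥ R.mulVec (star q) = bform R q (star q) := rfl
    rw [h1, bform_expand]
    refine Finset.sum_eq_zero fun j _ => ?_
    by_cases hj : q j = 0
    · simp [hj]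
    · simp [h j hj]
  rw [hz] at hpos
  exact lt_irrefl 0 hpos

lemma q_nd (hR : R.PosDef) (d k : ℕ) (h : k + d < N)
    (ho : ∀ j : ℕ, k ≤ j → j < k + d → bform R (pqAux R d k).2 (eVec N j) = 0)
    (hv : bform R (pqAux R d k).2 (eVec N (k + d)) = 0) : False := by
  have hq0 : (pqAux R d k).2 = 0 := by
    refine posdef_zero R hR _ fun j hj => ?_
    have hrange : k ≤ (j:ℕ) ∧ (j:ℕ) ≤ k + d := by
      by_contra hc
      exact hj ((pq_support R d k j (by omega)).2)
    rcases Nat.lt_or_ge (j:ℕ) (k + d) with hlt | hge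
    · exact ho (j:ℕ) hrange.1 hlt
    · have : (j:ℕ) = k + d := by omega
      rw [this]; exact hv
  have h1 : (pqAux R d k).2 ⟨k + d, h⟩ = 1 := q_monic R d k _ rfl
  rw [hq0] at h1
  simpa using h1

lemma p_nd (hR : R.PosDef) (d k : ℕ) (h : k + d < N)
    (ho : ∀ j : ℕ, k < j → j ≤ k + d → bform R (pqAux R d k).1 (eVec N j) = 0)
    (hv : bform R (pqAux R d k).1 (eVec N k) = 0) : False := by
  have hq0 : (pqAux R d k).1 = 0 := by
    refine posdef_zero R hR _ fun j hj => ?_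
    have hrange : k ≤ (j:ℕ) ∧ (j:ℕ) ≤ k + d := by
      by_contra hc
      exact hj ((pq_support R d k j (by omega)).1)
    rcases Nat.lt_or_ge k (j:ℕ) with hlt | hge
    · exact ho (j:ℕ) hlt hrange.2
    · have : (j:ℕ) = k := by omega
      rw [this]; exact hv
  have h1 : (pqAux R d k).1 ⟨k, by omega⟩ = 1 := p_monic R d k _ rfl
  rw [hq0] at h1
  simpa using h1

lemma bform_sub_smul (v v' w : Fin N → ℂ) (a : ℂ) :
    bform R (v - a • v') w = bform R v w - a * bform R v' w := by
  simp [bform, sub_dotProduct, smul_dotProduct, smul_eq_mul]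

lemma orth (hR : R.PosDef) :
    ∀ d k, k + d < N →
      (∀ j : ℕ, k < j → j ≤ k + d → bform R (pqAux R d k).1 (eVec N j) = 0) ∧
      (∀ j : ℕ, k ≤ j → j < k + d → bform R (pqAux R d k).2 (eVec N j) = 0) := by
  intro d
  induction d with
  | zero => exact fun k hk => ⟨fun j h1 h2 => absurd h1 (by omega), fun j h1 h2 => absurd h1 (by omega)⟩
  | succ d ih =>
    intro k hk
    have hp := ih k (by omega)
    have hq := ih (k+1) (by omega)
    have hqne : bform R (pqAux R d (k+1)).2 (eVec N (k+1+d)) ≠ 0 :=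
      fun hv => q_nd R hR d (k+1) (by omega) hq.2 hv
    have hpne : bform R (pqAux R d k).1 (eVec N k) ≠ 0 :=
      fun hv => p_nd R hR d k (by omega) hp.1 hv
    have hunf1 : (pqAux R (d+1) k).1 = (pqAux R d k).1 -
        (bform R (pqAux R d k).1 (eVec N (k+d+1)) /
          bform R (pqAux R d (k+1)).2 (eVec N (k+d+1))) • (pqAux R d (k+1)).2 := rfl
    have hunf2 : (pqAux R (d+1) k).2 = (pqAux R d (k+1)).2 -
        (bform R (pqAux R d (k+1)).2 (eVec N k) /
          bform R (pqAux R d k).1 (eVec N k)) • (pqAux R d k).1 := rfl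
    constructor
    · intro j h1 h2
      rw [hunf1, bform_sub_smul]
      rcases Nat.lt_or_ge j (k+d+1) with hlt | hge
      · rw [hp.1 j h1 (by omega), hq.2 j (by omega) (by omega)]
        ring
      · have hj : j = k+d+1 := by omega
        subst hj
        have : k+d+1 = k+1+d := by omega
        rw [this, div_mul_cancel₀ _ hqne]
        ring
    · intro j h1 h2
      rw [hunf2, bform_sub_smul]
      rcases Nat.lt_or_ge k j with hlt | hge
      · rw [hq.2 j (by omega) (by omega), hp.1 j hlt (by omega)]
        ring
      · have hj : j = k := by omega
        subst hj
        rw [div_mul_cancel₀ _ hpne]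
        ring

lemma q_nonzero (hR : R.PosDef) (d k : ℕ) (h : k + d < N) :
    bform R (pqAux R d k).2 (eVec N (k + d)) ≠ 0 :=
  fun hv => q_nd R hR d k h (orth R hR d k h).2 hv

lemma p_nonzero (hR : R.PosDef) (d k : ℕ) (h : k + d < N) :
    bform R (pqAux R d k).1 (eVec N k) ≠ 0 :=
  fun hv => p_nd R hR d k h (orth R hR d k h).1 hv

end BezAux

namespace BezAux

variable {N : ℕ} (R : Matrix (Fin N) (Fin N) ℂ)

lemma pd_isUnit_det (hR : R.PosDef) : IsUnit R.det := by
  rw [isUnit_iff_ne_zero]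
  intro hdet
  obtain ⟨v, hv0, hv⟩ := (Matrix.exists_mulVec_eq_zero_iff).2 hdet
  have := hR.dotProduct_mulVec_pos hv0
  rw [hv] at this
  simp only [dotProduct_zero] at this
  exact lt_irrefl 0 this

lemma bform_inv_row (hR : R.PosDef) (i : Fin N) (w : Fin N → ℂ) :
    bform R (fun m => R⁻¹ i m) w = w i := by
  have h1 : bform R (fun m => R⁻¹ i m) w = (R⁻¹.mulVec (R.mulVec w)) i := rfl
  rw [h1, Matrix.mulVec_mulVec, Matrix.nonsing_inv_mul R (pd_isUnit_det R hR),
    Matrix.one_mulVec]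

lemma mulVec_inv_col (hR : R.PosDef) (z : Fin N) :
    R.mulVec (fun i => R⁻¹ i z) = fun m => if m = z then 1 else 0 := by
  funext m
  have h1 : R.mulVec (fun i => R⁻¹ i z) m = (R * R⁻¹) m z := by
    simp [Matrix.mulVec, Matrix.mul_apply, dotProduct]
  rw [h1, Matrix.mul_nonsing_inv R (pd_isUnit_det R hR)]
  simp [Matrix.one_apply]

lemma row_zero_eq_zero (hR : R.PosDef) (x : Fin N → ℂ)
    (h : ∀ z : Fin N, bform R x (eVec N (z:ℕ)) = 0) : x = 0 := by
  have hv : Matrix.vecMul x R = 0 := by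
    funext z
    have : Matrix.vecMul x R z = bform R x (eVec N (z:ℕ)) := by
      rw [bform_e]; rfl
    rw [this, h z]
    simp
  calc x = Matrix.vecMul x (R * R⁻¹) := by
        rw [Matrix.mul_nonsing_inv R (pd_isUnit_det R hR), Matrix.vecMul_one]
    _ = Matrix.vecMul (Matrix.vecMul x R) R⁻¹ := (Matrix.vecMul_vecMul x R R⁻¹).symm
    _ = 0 := by rw [hv, Matrix.zero_vecMul]

variable (n1 : ℕ)

/-- shift down by n1 -/
def Zv (x : Fin N → ℂ) : Fin N → ℂ := fun j =>
  if h : n1 ≤ (j:ℕ) then x ⟨(j:ℕ) - n1, Nat.lt_of_le_of_lt (Nat.sub_le _ _) j.isLt⟩ else 0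

/-- cut off last n1 entries -/
def cutv (x : Fin N → ℂ) : Fin N → ℂ := fun j => if (j:ℕ) + n1 < N then x j else 0

lemma mulVec_range (y : Fin N → ℂ) (i0 : Fin N) :
    R.mulVec y i0 = ∑ j ∈ Finset.range N,
      (if h : j < N then R i0 ⟨j, h⟩ * y ⟨j, h⟩ else 0) := by
  have h0 := Fin.sum_univ_eq_sum_range
    (fun j : ℕ => if h : j < N then R i0 ⟨j, h⟩ * y ⟨j, h⟩ else (0:ℂ)) N
  refine Eq.trans ?_ h0
  show (∑ j : Fin N, R i0 j * y j) = _
  refine Finset.sum_congr rfl fun j _ => ?_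
  rw [dif_pos j.isLt]

lemma mulVec_shift (hn1 : 0 < n1) (hn1N : n1 ≤ N)
    (hBT : ∀ (i j : ℕ) (hi : i + n1 < N) (hj : j + n1 < N),
      R ⟨i + n1, hi⟩ ⟨j + n1, hj⟩ =
        R ⟨i, Nat.lt_of_le_of_lt (Nat.le_add_right i n1) hi⟩
          ⟨j, Nat.lt_of_le_of_lt (Nat.le_add_right j n1) hj⟩)
    (x : Fin N → ℂ) (i : Fin N) (hi : n1 ≤ (i:ℕ)) :
    R.mulVec (Zv n1 x) i
      = R.mulVec (cutv n1 x) ⟨(i:ℕ) - n1, Nat.lt_of_le_of_lt (Nat.sub_le _ _) i.isLt⟩ := by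
  have mulVec_eq_range := mulVec_range R
  have hrangeL : Finset.range N = Finset.range (n1 + (N - n1)) := by
    rw [Nat.add_sub_cancel' hn1N]
  have hrangeR : Finset.range N = Finset.range ((N - n1) + n1) := by
    rw [Nat.sub_add_cancel hn1N]
  rw [mulVec_eq_range, mulVec_eq_range]
  conv_lhs => rw [hrangeL, Finset.sum_range_add]
  conv_rhs => rw [hrangeR, Finset.sum_range_add]
  have h1 : ∀ j ∈ Finset.range n1,
      (if h : j < N then R i ⟨j, h⟩ * Zv n1 x ⟨j, h⟩ else 0) = 0 := by
    intro j hj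
    rw [Finset.mem_range] at hj
    rw [dif_pos (by omega : j < N)]
    have hzz : Zv n1 x ⟨j, by omega⟩ = 0 := by
      rw [Zv]
      refine dif_neg ?_
      simpa using by omega
    rw [hzz, mul_zero]
  have h2 : ∀ j ∈ Finset.range n1,
      (if h : (N - n1) + j < N then
        R ⟨(i:ℕ) - n1, Nat.lt_of_le_of_lt (Nat.sub_le _ _) i.isLt⟩ ⟨(N - n1) + j, h⟩ *
          cutv n1 x ⟨(N - n1) + j, h⟩ else 0) = 0 := by
    intro j hj
    rw [Finset.mem_range] at hj
    rw [dif_pos (by omega : (N - n1) + j < N)]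
    have hcc : cutv n1 x ⟨(N - n1) + j, by omega⟩ = 0 := by
      rw [cutv]
      refine if_neg ?_
      simpa using by omega
    rw [hcc, mul_zero]
  rw [Finset.sum_eq_zero h1, Finset.sum_eq_zero h2, zero_add, add_zero]
  refine Finset.sum_congr rfl fun t ht => ?_
  rw [Finset.mem_range] at ht
  rw [dif_pos (by omega : n1 + t < N), dif_pos (by omega : t < N)]
  have hz : Zv n1 x ⟨n1 + t, by omega⟩ = x ⟨t, by omega⟩ := by
    rw [Zv, dif_pos (by simp)]
    congr 1
    apply Fin.ext
    simp
  have hc : cutv n1 x ⟨t, by omega⟩ = x ⟨t, by omega⟩ := by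
    rw [cutv]
    refine if_pos ?_
    simpa using by omega
  rw [hz, hc]
  congr 1
  have hbt := hBT ((i:ℕ) - n1) t (by omega) (by omega)
  have hii : ((i:ℕ) - n1) + n1 = (i:ℕ) := by omega
  convert hbt using 2 <;> apply Fin.ext <;> simp [hii, Nat.add_comm]

end BezAux

namespace BezAux

variable {N : ℕ} (R : Matrix (Fin N) (Fin N) ℂ) (n1 : ℕ)

def pA (a : ℕ) : Fin N → ℂ := pVec R a (N-1)
def qA (a : ℕ) : Fin N → ℂ := qVec R 0 (N - n1 + a)
def vp (a : ℕ) : ℂ := vSc' R a (N-1)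
def vq (a : ℕ) : ℂ := vSc R 0 (N - n1 + a)

lemma pA_supp (a : ℕ) (m : Fin N) (hm : (m:ℕ) < a) : pA R a m = 0 :=
  (pq_support R _ a m (Or.inl hm)).1

lemma pA_diag (a : ℕ) (ha : a < N) : pA R a ⟨a, ha⟩ = 1 := p_monic R _ a _ rfl

lemma pA_orth (hR : R.PosDef) (a : ℕ) (ha : a < N) (j : ℕ) (hj1 : a < j) (hj2 : j < N) :
    bform R (pA R a) (eVec N j) = 0 :=
  (orth R hR ((N-1)-a) a (by omega)).1 j hj1 (by omega)

lemma vp_ne (hR : R.PosDef) (a : ℕ) (ha : a < N) : vp R a ≠ 0 :=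
  p_nonzero R hR ((N-1)-a) a (by omega)

lemma qA_supp (hn : n1 ≤ N) (a : ℕ) (han : a < n1) (m : Fin N) (hm : N - n1 + a < (m:ℕ)) :
    qA R n1 a m = 0 :=
  (pq_support R _ 0 m (Or.inr (by omega))).2

lemma qA_diag (hn : n1 ≤ N) (a : ℕ) (han : a < n1) :
    qA R n1 a ⟨N - n1 + a, by omega⟩ = 1 :=
  q_monic R _ 0 _ (by simp)

lemma qA_orth (hR : R.PosDef) (hn : n1 ≤ N) (a : ℕ) (han : a < n1) (j : ℕ)
    (hj : j < N - n1 + a) : bform R (qA R n1 a) (eVec N j) = 0 :=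
  (orth R hR (N - n1 + a) 0 (by omega)).2 j (Nat.zero_le _) (by omega)

lemma vq_ne (hR : R.PosDef) (hn : n1 ≤ N) (a : ℕ) (han : a < n1) : vq R n1 a ≠ 0 := by
  have h := q_nonzero R hR (N - n1 + a) 0 (by omega)
  simpa [vq, vSc, qVec] using h

lemma gram_p_lt (hR : R.PosDef) {a b : ℕ} (hab : a < b) (hb : b < N) :
    bform R (pA R a) (star (pA R b)) = 0 := by
  rw [bform_expand]
  refine Finset.sum_eq_zero fun j _ => ?_
  by_cases hj : (j:ℕ) < b
  · have : pA R b j = 0 := pA_supp R b j hj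
    simp [this]
  · have : bform R (pA R a) (eVec N (j:ℕ)) = 0 :=
      pA_orth R hR a (by omega) (j:ℕ) (by omega) j.isLt
    simp [this]

lemma gram_p_diag (hR : R.PosDef) {a : ℕ} (ha : a < N) :
    bform R (pA R a) (star (pA R a)) = vp R a := by
  rw [bform_expand]
  rw [Finset.sum_eq_single (⟨a, ha⟩ : Fin N)]
  · have h1 : (star (pA R a)) ⟨a, ha⟩ = 1 := by
      simp [pA_diag R a ha]
    rw [h1, one_mul]
    rfl
  · intro j _ hj
    rcases Nat.lt_or_ge (j:ℕ) a with hlt | hge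
    · have : pA R a j = 0 := pA_supp R a j hlt
      simp [this]
    · have hgt : a < (j:ℕ) := by
        rcases Nat.lt_or_ge a (j:ℕ) with h | h
        · exact h
        · exfalso; apply hj; apply Fin.ext; simp; omega
      have : bform R (pA R a) (eVec N (j:ℕ)) = 0 :=
        pA_orth R hR a ha (j:ℕ) hgt j.isLt
      simp [this]
  · intro h
    exact absurd (Finset.mem_univ _) h

lemma gram_p (hR : R.PosDef) (hH : Rᴴ = R) {a b : ℕ} (ha : a < N) (hb : b < N) :
    bform R (pA R a) (star (pA R b)) = if a = b then vp R a else 0 := by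
  rcases lt_trichotomy a b with h | h | h
  · rw [if_neg (by omega), gram_p_lt R hR h hb]
  · subst h; rw [if_pos rfl, gram_p_diag R hR ha]
  · rw [if_neg (by omega), bform_symm R hH, gram_p_lt R hR h ha, map_zero]

lemma gram_q_lt (hR : R.PosDef) (hn : n1 ≤ N) {a b : ℕ} (hab : b < a) (ha : a < n1) :
    bform R (qA R n1 a) (star (qA R n1 b)) = 0 := by
  rw [bform_expand]
  refine Finset.sum_eq_zero fun j _ => ?_
  by_cases hj : N - n1 + b < (j:ℕ)
  · have : qA R n1 b j = 0 := qA_supp R n1 hn b (by omega) j hj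
    simp [this]
  · have : bform R (qA R n1 a) (eVec N (j:ℕ)) = 0 :=
      qA_orth R n1 hR hn a ha (j:ℕ) (by omega)
    simp [this]

lemma gram_q_diag (hR : R.PosDef) (hn : n1 ≤ N) {a : ℕ} (ha : a < n1) :
    bform R (qA R n1 a) (star (qA R n1 a)) = vq R n1 a := by
  rw [bform_expand]
  rw [Finset.sum_eq_single (⟨N - n1 + a, by omega⟩ : Fin N)]
  · have h1 : (star (qA R n1 a)) ⟨N - n1 + a, by omega⟩ = 1 := by
      simp [qA_diag R n1 hn a ha]
    rw [h1, one_mul]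
    have : bform R (qA R n1 a) (eVec N (N - n1 + a)) = vq R n1 a := by
      simp [vq, vSc, qVec, qA]
    exact this
  · intro j _ hj
    rcases Nat.lt_or_ge (N - n1 + a) (j:ℕ) with hlt | hge
    · have : qA R n1 a j = 0 := qA_supp R n1 hn a ha j hlt
      simp [this]
    · have hgt : (j:ℕ) < N - n1 + a := by
        rcases Nat.lt_or_ge (j:ℕ) (N - n1 + a) with h | h
        · exact h
        · exfalso; apply hj; apply Fin.ext; simp; omega
      have : bform R (qA R n1 a) (eVec N (j:ℕ)) = 0 :=
        qA_orth R n1 hR hn a ha (j:ℕ) hgt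
      simp [this]
  · intro h
    exact absurd (Finset.mem_univ _) h

lemma gram_q (hR : R.PosDef) (hH : Rᴴ = R) (hn : n1 ≤ N) {a b : ℕ} (ha : a < n1) (hb : b < n1) :
    bform R (qA R n1 a) (star (qA R n1 b)) = if a = b then vq R n1 a else 0 := by
  rcases lt_trichotomy a b with h | h | h
  · rw [if_neg (by omega), bform_symm R hH, gram_q_lt R n1 hR hn h hb, map_zero]
  · subst h; rw [if_pos rfl, gram_q_diag R n1 hR hn ha]
  · rw [if_neg (by omega), gram_q_lt R n1 hR hn h ha]

end BezAux

namespace BezAux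

variable {N : ℕ} (R : Matrix (Fin N) (Fin N) ℂ) (n1 : ℕ)

lemma bform_zero2 (v : Fin N → ℂ) : bform R v 0 = 0 := by
  simp [bform, Matrix.mulVec_zero, dotProduct_zero]

lemma bform_add2 (v w1 w2 : Fin N → ℂ) : bform R v (w1 + w2) = bform R v w1 + bform R v w2 := by
  simp [bform, Matrix.mulVec_add, dotProduct_add]

lemma bform_sub2 (v w1 w2 : Fin N → ℂ) : bform R v (w1 - w2) = bform R v w1 - bform R v w2 := by
  simp [bform, Matrix.mulVec_sub, dotProduct_sub]

lemma bform_smul2 (v w : Fin N → ℂ) (c : ℂ) : bform R v (c • w) = c * bform R v w := by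
  simp [bform, Matrix.mulVec_smul, dotProduct_smul, smul_eq_mul]

lemma bform_sum2 {ι : Type*} (v : Fin N → ℂ) (s : Finset ι) (f : ι → Fin N → ℂ) :
    bform R v (∑ a ∈ s, f a) = ∑ a ∈ s, bform R v (f a) := by
  classical
  induction s using Finset.induction_on with
  | empty => simp [bform_zero2]
  | insert _ _ hx ih => rw [Finset.sum_insert hx, Finset.sum_insert hx, bform_add2, ih]

lemma mulVec_sum2 {ι : Type*} (s : Finset ι) (f : ι → Fin N → ℂ) :
    R.mulVec (∑ a ∈ s, f a) = ∑ a ∈ s, R.mulVec (f a) := by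
  classical
  induction s using Finset.induction_on with
  | empty => simp [Matrix.mulVec_zero]
  | insert _ _ hx ih => rw [Finset.sum_insert hx, Finset.sum_insert hx, Matrix.mulVec_add, ih]

lemma bform_fst_sub (v1 v2 w : Fin N → ℂ) :
    bform R (v1 - v2) w = bform R v1 w - bform R v2 w := by
  simp [bform, sub_dotProduct]

lemma bform_fst_smul (c : ℂ) (v w : Fin N → ℂ) : bform R (c • v) w = c * bform R v w := by
  simp [bform, smul_dotProduct, smul_eq_mul]

lemma bform_fst_sum {ι : Type*} (s : Finset ι) (f : ι → Fin N → ℂ) (w : Fin N → ℂ) :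
    bform R (∑ a ∈ s, f a) w = ∑ a ∈ s, bform R (f a) w := by
  classical
  induction s using Finset.induction_on with
  | empty => simp [bform, zero_dotProduct]
  | insert _ _ hx ih =>
    rw [Finset.sum_insert hx, Finset.sum_insert hx, ← ih]
    simp [bform, add_dotProduct]

lemma dot_ind (v : Fin N → ℂ) (z : Fin N) : v ⬝ᵥ (fun m => if m = z then 1 else 0) = v z := by
  simp [dotProduct]

lemma pi_claim (hR : R.PosDef) (hH : Rᴴ = R) (hn1 : 0 < n1) (hn : n1 ≤ N)
    (j : Fin N) (hj : N - n1 ≤ (j:ℕ)) (m : Fin N) :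
    R⁻¹ j m = ∑ a ∈ Finset.range n1,
      qA R n1 a m * ((vq R n1 a)⁻¹ * starRingEnd ℂ (qA R n1 a j)) := by
  classical
  set c : ℕ → ℂ := fun a => (vq R n1 a)⁻¹ * starRingEnd ℂ (qA R n1 a j) with hc
  set ρ : Fin N → ℂ := (fun m' => R⁻¹ j m') - ∑ a ∈ Finset.range n1, c a • qA R n1 a with hρ
  have hexp : ∀ w : Fin N → ℂ, bform R ρ w
      = bform R (fun m' => R⁻¹ j m') w - ∑ a ∈ Finset.range n1, c a * bform R (qA R n1 a) w := by
    intro w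
    rw [hρ, bform_fst_sub, bform_fst_sum]
    congr 1
    exact Finset.sum_congr rfl fun a _ => bform_fst_smul R (c a) (qA R n1 a) w
  have hβ : ∀ z : Fin N, (z:ℕ) < N - n1 → bform R ρ (eVec N (z:ℕ)) = 0 := by
    intro z hz
    rw [hexp]
    have e1 : bform R (fun m' => R⁻¹ j m') (eVec N (z:ℕ)) = 0 := by
      rw [bform_inv_row R hR]
      have hne : (j:ℕ) ≠ (z:ℕ) := by omega
      simp [eVec, hne]
    rw [e1, Finset.sum_eq_zero, sub_zero]
    intro a ha
    rw [Finset.mem_range] at ha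
    rw [qA_orth R n1 hR hn a ha (z:ℕ) (by omega), mul_zero]
  have htri : ∀ b, b < n1 → bform R ρ (eVec N (N - n1 + b)) = 0 := by
    intro b
    induction b using Nat.strong_induction_on with
    | _ b IH =>
    intro hb
    have hpair : bform R ρ (star (qA R n1 b)) = 0 := by
      rw [hexp]
      have e1 : bform R (fun m' => R⁻¹ j m') (star (qA R n1 b))
          = starRingEnd ℂ (qA R n1 b j) := by
        rw [bform_inv_row R hR]
        simp
      rw [e1, Finset.sum_eq_single b]
      · rw [gram_q R n1 hR hH hn hb hb, if_pos rfl]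
        have hne := vq_ne R n1 hR hn b hb
        have hcb : c b = (vq R n1 b)⁻¹ * starRingEnd ℂ (qA R n1 b j) := rfl
        rw [hcb, mul_comm ((vq R n1 b)⁻¹) _, mul_assoc, inv_mul_cancel₀ hne, mul_one, sub_self]
      · intro a ha hab
        rw [Finset.mem_range] at ha
        rw [gram_q R n1 hR hH hn ha hb, if_neg hab, mul_zero]
      · intro hmem
        exact absurd (Finset.mem_range.mpr hb) hmem
    have h0 : (0:ℂ) = bform R ρ (eVec N (N - n1 + b)) := by
      rw [← hpair, bform_expand]
      rw [Finset.sum_eq_single (⟨N - n1 + b, by omega⟩ : Fin N)]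
      · have h1 : (star (qA R n1 b)) ⟨N - n1 + b, by omega⟩ = 1 := by
          simp [qA_diag R n1 hn b hb]
        rw [h1, one_mul]
      · intro z _ hzne
        by_cases hz : (z:ℕ) < N - n1
        · rw [hβ z hz, mul_zero]
        · rcases lt_trichotomy ((z:ℕ) - (N - n1)) b with hlt | heq | hgt
          · have hz2 : bform R ρ (eVec N (z:ℕ)) = 0 := by
              have hih := IH _ hlt (by omega)
              rw [show (z:ℕ) = N - n1 + ((z:ℕ) - (N - n1)) from by omega]
              exact hih
            rw [hz2, mul_zero]
          · exfalso; apply hzne; apply Fin.ext; simp; omega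
          · have hsup : qA R n1 b z = 0 := qA_supp R n1 hn b hb z (by omega)
            simp [hsup]
      · intro hmem; exact absurd (Finset.mem_univ _) hmem
    exact h0.symm
  have hall : ∀ z : Fin N, bform R ρ (eVec N (z:ℕ)) = 0 := by
    intro z
    by_cases hz : (z:ℕ) < N - n1
    · exact hβ z hz
    · have hbz : (z:ℕ) - (N - n1) < n1 := by have := z.isLt; omega
      have hh := htri _ hbz
      rw [show (z:ℕ) = N - n1 + ((z:ℕ) - (N - n1)) from by omega]
      exact hh
  have hρ0 : ρ = 0 := row_zero_eq_zero R hR ρ hall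
  have hm := congrFun hρ0 m
  rw [hρ] at hm
  simp only [Pi.sub_apply, Finset.sum_apply, Pi.smul_apply, smul_eq_mul, Pi.zero_apply] at hm
  rw [sub_eq_zero] at hm
  rw [hm]
  exact Finset.sum_congr rfl fun a _ => by rw [hc]; ring

end BezAux

namespace BezAux

variable {N : ℕ} (R : Matrix (Fin N) (Fin N) ℂ) (n1 : ℕ)

/-- entries in the last block -/
def tailv (x : Fin N → ℂ) : Fin N → ℂ := fun j => if (j:ℕ) + n1 < N then 0 else x j

lemma cutv_eq (x : Fin N → ℂ) : cutv n1 x = x - tailv n1 x := by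
  funext j
  simp only [cutv, tailv, Pi.sub_apply]
  split <;> simp

lemma bform_inv_col (hR : R.PosDef) (v : Fin N → ℂ) (z : Fin N) :
    bform R v (fun i => R⁻¹ i z) = v z := by
  unfold bform
  rw [mulVec_inv_col R hR, dot_ind]

lemma pA_bform_Zv (hR : R.PosDef) (hn : n1 ≤ N) (b : ℕ) (hb : b < n1) (x : Fin N → ℂ) :
    bform R (pA R b) (Zv n1 x) = 0 := by
  rw [bform_expand]
  refine Finset.sum_eq_zero fun j _ => ?_
  by_cases hj : n1 ≤ (j:ℕ)
  · rw [pA_orth R hR b (by omega) (j:ℕ) (by omega) j.isLt, mul_zero]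
  · rw [Zv, dif_neg hj, zero_mul]

lemma bform_pA_Pterm (hR : R.PosDef) (hH : Rᴴ = R) (hn : n1 ≤ N) (b : ℕ) (hb : b < n1)
    (z : Fin N) :
    bform R (pA R b) (∑ a ∈ Finset.range n1, ((vp R a)⁻¹ * pA R a z) • star (pA R a))
      = pA R b z := by
  rw [bform_sum2]
  rw [Finset.sum_eq_single b]
  · rw [bform_smul2, gram_p R hR hH (by omega) (by omega), if_pos rfl]
    have hne := vp_ne R hR b (by omega)
    rw [mul_comm ((vp R b)⁻¹) _, mul_assoc, inv_mul_cancel₀ hne, mul_one]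
  · intro a ha hab
    rw [Finset.mem_range] at ha
    rw [bform_smul2, gram_p R hR hH (by omega) (by omega), if_neg (fun h => hab h.symm), mul_zero]
  · intro hmem
    exact absurd (Finset.mem_range.mpr hb) hmem

lemma mulVec_Pterm_high (hR : R.PosDef) (hH : Rᴴ = R) (hn : n1 ≤ N) (z : Fin N)
    (i : Fin N) (hi : n1 ≤ (i:ℕ)) :
    R.mulVec (∑ a ∈ Finset.range n1, ((vp R a)⁻¹ * pA R a z) • star (pA R a)) i = 0 := by
  rw [mulVec_sum2]
  rw [Finset.sum_apply]
  refine Finset.sum_eq_zero fun a ha => ?_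
  rw [Finset.mem_range] at ha
  rw [Matrix.mulVec_smul, Pi.smul_apply, mulVec_star_apply R hH,
    pA_orth R hR a (by omega) (i:ℕ) (by omega) i.isLt, map_zero, smul_zero]

lemma mulVec_Qterm_low (hR : R.PosDef) (hH : Rᴴ = R) (hn : n1 ≤ N) (z' : Fin N)
    (i' : Fin N) (hi' : (i':ℕ) < N - n1) :
    R.mulVec (∑ a ∈ Finset.range n1, ((vq R n1 a)⁻¹ * qA R n1 a z') • star (qA R n1 a)) i'
      = 0 := by
  rw [mulVec_sum2]
  rw [Finset.sum_apply]
  refine Finset.sum_eq_zero fun a ha => ?_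
  rw [Finset.mem_range] at ha
  rw [Matrix.mulVec_smul, Pi.smul_apply, mulVec_star_apply R hH,
    qA_orth R n1 hR hn a ha (i':ℕ) (by omega), map_zero, smul_zero]

lemma kappa_zero (hR : R.PosDef) (hn : n1 ≤ N) (κ : Fin N → ℂ)
    (hA : ∀ b : ℕ, b < n1 → bform R (pA R b) κ = 0)
    (hB : ∀ i : Fin N, n1 ≤ (i:ℕ) → R.mulVec κ i = 0) : κ = 0 := by
  have hw : ∀ t : ℕ, ∀ i : Fin N, n1 - t ≤ (i:ℕ) → R.mulVec κ i = 0 := by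
    intro t
    induction t with
    | zero => exact fun i hi => hB i (by omega)
    | succ t iht =>
      intro i hi
      by_cases hge : n1 - t ≤ (i:ℕ)
      · exact iht i hge
      · have hilt : (i:ℕ) < n1 := by omega
        have hA' := hA (i:ℕ) hilt
        have hdot : bform R (pA R (i:ℕ)) κ = ∑ i', pA R (i:ℕ) i' * R.mulVec κ i' := rfl
        rw [hdot] at hA'
        rw [Finset.sum_eq_single i] at hA'
        · have h1 : pA R (i:ℕ) i = 1 := by
            have hd := pA_diag R (i:ℕ) (by omega)
            simpa using hd
          rw [h1, one_mul] at hA'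
          exact hA'
        · intro j _ hj
          rcases Nat.lt_or_ge (j:ℕ) (i:ℕ) with hlt | hge2
          · rw [pA_supp R (i:ℕ) j hlt, zero_mul]
          · have hij : (i:ℕ) < (j:ℕ) := by
              rcases Nat.lt_or_ge (i:ℕ) (j:ℕ) with h | h
              · exact h
              · exfalso; apply hj; apply Fin.ext; omega
            rw [iht j (by omega), mul_zero]
        · intro hmem; exact absurd (Finset.mem_univ _) hmem
  have hw0 : R.mulVec κ = 0 := funext fun i => hw n1 i (by omega)
  have hκeq : κ = R⁻¹.mulVec (R.mulVec κ) := by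
    rw [Matrix.mulVec_mulVec, Matrix.nonsing_inv_mul R (pd_isUnit_det R hR), Matrix.one_mulVec]
  rw [hκeq, hw0, Matrix.mulVec_zero]

lemma displacement (hR : R.PosDef) (hH : Rᴴ = R) (hn1 : 0 < n1) (hn : n1 ≤ N)
    (hBT : ∀ (i j : ℕ) (hi : i + n1 < N) (hj : j + n1 < N),
      R ⟨i + n1, hi⟩ ⟨j + n1, hj⟩ =
        R ⟨i, Nat.lt_of_le_of_lt (Nat.le_add_right i n1) hi⟩
          ⟨j, Nat.lt_of_le_of_lt (Nat.le_add_right j n1) hj⟩)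
    (x z : Fin N) :
    R⁻¹ x z =
      (if n1 ≤ (x:ℕ) ∧ n1 ≤ (z:ℕ) then
        R⁻¹ ⟨(x:ℕ) - n1, Nat.lt_of_le_of_lt (Nat.sub_le _ _) x.isLt⟩
            ⟨(z:ℕ) - n1, Nat.lt_of_le_of_lt (Nat.sub_le _ _) z.isLt⟩
          - ∑ a ∈ Finset.range n1,
              starRingEnd ℂ (qA R n1 a ⟨(x:ℕ) - n1, Nat.lt_of_le_of_lt (Nat.sub_le _ _) x.isLt⟩)
                * ((vq R n1 a)⁻¹
                  * qA R n1 a ⟨(z:ℕ) - n1, Nat.lt_of_le_of_lt (Nat.sub_le _ _) z.isLt⟩)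
      else 0)
      + ∑ a ∈ Finset.range n1, starRingEnd ℂ (pA R a x) * ((vp R a)⁻¹ * pA R a z) := by
  classical
  set Pterm : Fin N → ℂ := ∑ a ∈ Finset.range n1, ((vp R a)⁻¹ * pA R a z) • star (pA R a)
    with hPterm
  have hPapp : ∀ m : Fin N, Pterm m
      = ∑ a ∈ Finset.range n1, starRingEnd ℂ (pA R a m) * ((vp R a)⁻¹ * pA R a z) := by
    intro m
    rw [hPterm, Finset.sum_apply]
    refine Finset.sum_congr rfl fun a _ => ?_
    rw [Pi.smul_apply, Pi.star_apply, smul_eq_mul, Complex.star_def]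
    ring
  by_cases hz : n1 ≤ (z:ℕ)
  · -- main case
    set z' : Fin N := ⟨(z:ℕ) - n1, Nat.lt_of_le_of_lt (Nat.sub_le _ _) z.isLt⟩ with hz'
    set Qterm : Fin N → ℂ :=
      ∑ a ∈ Finset.range n1, ((vq R n1 a)⁻¹ * qA R n1 a z') • star (qA R n1 a) with hQterm
    have hQapp : ∀ m : Fin N, Qterm m
        = ∑ a ∈ Finset.range n1, starRingEnd ℂ (qA R n1 a m) * ((vq R n1 a)⁻¹ * qA R n1 a z') := by
      intro m
      rw [hQterm, Finset.sum_apply]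
      refine Finset.sum_congr rfl fun a _ => ?_
      rw [Pi.smul_apply, Pi.star_apply, smul_eq_mul, Complex.star_def]
      ring
    set κ : Fin N → ℂ :=
      (fun i => R⁻¹ i z) - Zv n1 (fun i => R⁻¹ i z') + Zv n1 Qterm - Pterm with hκ
    have hA : ∀ b : ℕ, b < n1 → bform R (pA R b) κ = 0 := by
      intro b hb
      rw [hκ, bform_sub2, bform_add2, bform_sub2, bform_inv_col R hR,
        pA_bform_Zv R n1 hR hn b hb, pA_bform_Zv R n1 hR hn b hb,
        bform_pA_Pterm R n1 hR hH hn b hb z]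
      ring
    have hB : ∀ i : Fin N, n1 ≤ (i:ℕ) → R.mulVec κ i = 0 := by
      intro i hi
      set i' : Fin N := ⟨(i:ℕ) - n1, Nat.lt_of_le_of_lt (Nat.sub_le _ _) i.isLt⟩ with hi'
      have hii' : (i':ℕ) < N - n1 := by
        have := i.isLt
        simp only [hi']
        omega
      have c1 : R.mulVec (fun m => R⁻¹ m z) i = if i = z then 1 else 0 :=
        congrFun (mulVec_inv_col R hR z) i
      have ctail : tailv n1 (fun m => R⁻¹ m z') = tailv n1 Qterm := by
        funext j
        simp only [tailv]
        by_cases hj : (j:ℕ) + n1 < N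
        · rw [if_pos hj, if_pos hj]
        · rw [if_neg hj, if_neg hj]
          have hjge : N - n1 ≤ (j:ℕ) := by omega
          rw [pi_claim R n1 hR hH hn1 hn j hjge z', hQapp j]
          refine Finset.sum_congr rfl fun a _ => ?_
          ring
      have c2 : R.mulVec (Zv n1 (fun m => R⁻¹ m z')) i
          = (if i = z then 1 else 0) - R.mulVec (tailv n1 (fun m => R⁻¹ m z')) i' := by
        rw [mulVec_shift R n1 hn1 hn hBT _ i hi, cutv_eq, Matrix.mulVec_sub, Pi.sub_apply]
        congr 1
        have : R.mulVec (fun m => R⁻¹ m z') i' = if i' = z' then 1 else 0 :=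
          congrFun (mulVec_inv_col R hR z') i'
        rw [this]
        have hiff : i' = z' ↔ i = z := by
          constructor
          · intro h
            apply Fin.ext
            have h2 := congrArg Fin.val h
            simp only [hi', hz'] at h2
            omega
          · intro h
            apply Fin.ext
            simp only [hi', hz']
            rw [h]
        by_cases h : i = z
        · rw [if_pos h, if_pos (hiff.mpr h)]
        · rw [if_neg h, if_neg (fun hc => h (hiff.mp hc))]
      have c3 : R.mulVec (Zv n1 Qterm) i = - R.mulVec (tailv n1 Qterm) i' := by
        rw [mulVec_shift R n1 hn1 hn hBT _ i hi, cutv_eq, Matrix.mulVec_sub, Pi.sub_apply]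
        rw [hQterm, mulVec_Qterm_low R n1 hR hH hn z' i' hii']
        ring
      have c4 : R.mulVec Pterm i = 0 := by
        rw [hPterm]
        exact mulVec_Pterm_high R n1 hR hH hn z i hi
      rw [hκ, Matrix.mulVec_sub, Matrix.mulVec_add, Matrix.mulVec_sub,
        Pi.sub_apply, Pi.add_apply, Pi.sub_apply, c1, c2, c3, c4, ctail]
      ring
    have hκ0 : κ = 0 := kappa_zero R n1 hR hn κ hA hB
    have hx0 := congrFun hκ0 x
    rw [hκ] at hx0
    simp only [Pi.sub_apply, Pi.add_apply, Pi.zero_apply] at hx0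
    have hgoal : R⁻¹ x z = Zv n1 (fun i => R⁻¹ i z') x - Zv n1 Qterm x + Pterm x := by
      linear_combination hx0
    rw [hgoal, hPapp x]
    by_cases hx : n1 ≤ (x:ℕ)
    · rw [if_pos ⟨hx, hz⟩]
      congr 1
      simp only [Zv, dif_pos hx]
      rw [hQapp]
    · rw [if_neg (fun hc => hx hc.1)]
      simp only [Zv, dif_neg hx]
      try ring
  · -- z < n1 case
    set κ : Fin N → ℂ := (fun i => R⁻¹ i z) - Pterm with hκ
    have hA : ∀ b : ℕ, b < n1 → bform R (pA R b) κ = 0 := by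
      intro b hb
      rw [hκ, bform_sub2, bform_inv_col R hR, bform_pA_Pterm R n1 hR hH hn b hb z]
      ring
    have hB : ∀ i : Fin N, n1 ≤ (i:ℕ) → R.mulVec κ i = 0 := by
      intro i hi
      have c1 : R.mulVec (fun m => R⁻¹ m z) i = if i = z then 1 else 0 :=
        congrFun (mulVec_inv_col R hR z) i
      have c4 : R.mulVec Pterm i = 0 := by
        rw [hPterm]
        exact mulVec_Pterm_high R n1 hR hH hn z i hi
      rw [hκ, Matrix.mulVec_sub, Pi.sub_apply, c1, c4]
      have : ¬ (i = z) := by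
        intro h
        rw [h] at hi
        omega
      rw [if_neg this]
      ring
    have hκ0 : κ = 0 := kappa_zero R n1 hR hn κ hA hB
    have hx0 := congrFun hκ0 x
    rw [hκ] at hx0
    simp only [Pi.sub_apply, Pi.zero_apply] at hx0
    rw [if_neg (fun hc => hz hc.2), zero_add, ← hPapp x]
    linear_combination hx0

end BezAux

namespace BezAux

variable {N : ℕ} (R : Matrix (Fin N) (Fin N) ℂ) (n1 : ℕ)

def LpE (y x : ℕ) : ℂ :=
  if y / n1 ≤ x / n1 then pCoord R (y % n1) (N - 1) ((x / n1 - y / n1) * n1 + x % n1) else 0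

def LqE (y x : ℕ) : ℂ :=
  if y / n1 < x / n1 then qCoord R 0 (N - n1 + y % n1) ((x / n1 - y / n1 - 1) * n1 + x % n1)
  else 0

lemma LpE_base (hn1 : 0 < n1) (y x : ℕ) (hy : y < n1) (hx : x < N) :
    LpE R n1 y x = pA R y ⟨x, hx⟩ := by
  rw [LpE, if_pos (by rw [Nat.div_eq_of_lt hy]; exact Nat.zero_le _)]
  rw [Nat.mod_eq_of_lt hy, Nat.div_eq_of_lt hy]
  have h3 : (x / n1 - 0) * n1 + x % n1 = x := by
    rw [Nat.sub_zero]
    have h := Nat.div_add_mod' x n1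
    exact h
  rw [h3, pCoord, dif_pos hx]
  rfl

lemma LpE_high_zero (hn1 : 0 < n1) (y x : ℕ) (hy : n1 ≤ y) (hx : x < n1) :
    LpE R n1 y x = 0 := by
  rw [LpE, if_neg]
  have h1 : 1 ≤ y / n1 := (Nat.one_le_div_iff hn1).mpr hy
  rw [Nat.div_eq_of_lt hx]
  omega

lemma LqE_lo_zero (hn1 : 0 < n1) (y x : ℕ) (hx : x < n1) : LqE R n1 y x = 0 := by
  rw [LqE, if_neg]
  rw [Nat.div_eq_of_lt hx]
  exact Nat.not_lt_zero _

lemma LqE_base (hn1 : 0 < n1) (hn : n1 ≤ N) (y x : ℕ) (hy : y < n1) (hxN : x < N)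
    (hx : n1 ≤ x) :
    LqE R n1 y x = qA R n1 y ⟨x - n1, by omega⟩ := by
  rw [LqE, if_pos (by rw [Nat.div_eq_of_lt hy]; exact (Nat.one_le_div_iff hn1).mpr hx)]
  rw [Nat.mod_eq_of_lt hy, Nat.div_eq_of_lt hy]
  have key : (x / n1 - 0 - 1) * n1 + x % n1 = x - n1 := by
    rw [Nat.sub_zero]
    have hd := Nat.div_add_mod' x n1
    have hq1 : 1 ≤ x / n1 := (Nat.one_le_div_iff hn1).mpr hx
    have hmul : n1 ≤ x / n1 * n1 := by
      calc n1 = 1 * n1 := (one_mul n1).symm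
        _ ≤ x / n1 * n1 := Nat.mul_le_mul_right n1 hq1
    calc (x / n1 - 1) * n1 + x % n1 = (x / n1 * n1 - 1 * n1) + x % n1 := by rw [Nat.sub_mul]
      _ = (x / n1 * n1 - n1) + x % n1 := by rw [one_mul]
      _ = x / n1 * n1 + x % n1 - n1 := (Nat.sub_add_comm hmul).symm
      _ = x - n1 := by rw [hd]
  rw [key, qCoord, dif_pos (by omega : x - n1 < N)]
  rfl

lemma LpE_shift (hn1 : 0 < n1) (y x : ℕ) (hx : n1 ≤ x) :
    LpE R n1 (y + n1) x = LpE R n1 y (x - n1) := by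
  obtain ⟨x', rfl⟩ : ∃ x', x = x' + n1 := ⟨x - n1, (Nat.sub_add_cancel hx).symm⟩
  rw [Nat.add_sub_cancel]
  rw [LpE, LpE, Nat.add_div_right _ hn1, Nat.add_div_right _ hn1,
    Nat.add_mod_right, Nat.add_mod_right, Nat.add_sub_add_right]
  simp only [Nat.add_le_add_iff_right]

lemma LqE_shift (hn1 : 0 < n1) (y x : ℕ) (hx : n1 ≤ x) :
    LqE R n1 (y + n1) x = LqE R n1 y (x - n1) := by
  obtain ⟨x', rfl⟩ : ∃ x', x = x' + n1 := ⟨x - n1, (Nat.sub_add_cancel hx).symm⟩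
  rw [Nat.add_sub_cancel]
  rw [LqE, LqE, Nat.add_div_right _ hn1, Nat.add_div_right _ hn1,
    Nat.add_mod_right, Nat.add_mod_right, Nat.add_sub_add_right]
  simp only [Nat.add_lt_add_iff_right]

lemma LpE_zero_far (hn1 : 0 < n1) (hn : n1 ≤ N) (y x : ℕ) (hxy : x < y) :
    LpE R n1 y x = 0 := by
  by_cases hc : y / n1 ≤ x / n1
  · have hdiv : x / n1 ≤ y / n1 := Nat.div_le_div_right (le_of_lt hxy)
    have heq : y / n1 = x / n1 := le_antisymm hc hdiv
    rw [LpE, if_pos hc, heq, Nat.sub_self, zero_mul, zero_add]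
    have hmod : x % n1 < y % n1 := by
      have hd1 := Nat.div_add_mod' x n1
      have hd2 := Nat.div_add_mod' y n1
      rw [heq] at hd2
      have hrx : x % n1 < n1 := Nat.mod_lt _ hn1
      have hry : y % n1 < n1 := Nat.mod_lt _ hn1
      set t := x / n1 * n1
      omega
    rw [pCoord, dif_pos (lt_of_lt_of_le (Nat.mod_lt _ hn1) hn)]
    exact pA_supp R (y % n1) _ (by simpa using hmod)
  · rw [LpE, if_neg hc]

lemma LqE_zero_far (y x : ℕ) (hxy : x ≤ y) : LqE R n1 y x = 0 := by
  rw [LqE, if_neg]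
  exact not_lt.mpr (Nat.div_le_div_right hxy)

end BezAux

namespace BezAux

variable {N : ℕ} (R : Matrix (Fin N) (Fin N) ℂ) (n1 : ℕ)

def BN (x z : ℕ) : ℂ :=
  (∑ y ∈ Finset.range N, starRingEnd ℂ (LpE R n1 y x) * ((vp R (y % n1))⁻¹ * LpE R n1 y z))
  - ∑ y ∈ Finset.range N, starRingEnd ℂ (LqE R n1 y x) * ((vq R n1 (y % n1))⁻¹ * LqE R n1 y z)

lemma sum_split (f : ℕ → ℂ) (hn : n1 ≤ N) :
    ∑ y ∈ Finset.range N, f y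
      = (∑ y ∈ Finset.range n1, f y) + ∑ t ∈ Finset.range (N - n1), f (n1 + t) := by
  rw [show Finset.range N = Finset.range (n1 + (N - n1)) by rw [Nat.add_sub_cancel' hn],
    Finset.sum_range_add]

lemma sum_split' (f : ℕ → ℂ) (hn : n1 ≤ N) :
    ∑ y ∈ Finset.range N, f y
      = (∑ y ∈ Finset.range (N - n1), f y) + ∑ t ∈ Finset.range n1, f ((N - n1) + t) := by
  rw [show Finset.range N = Finset.range ((N - n1) + n1) by rw [Nat.sub_add_cancel hn],
    Finset.sum_range_add]

lemma BN_rec (hn1 : 0 < n1) (hn : n1 ≤ N) (x z : ℕ) (hx : x < N) (hz : z < N) :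
    BN R n1 x z =
      (if n1 ≤ x ∧ n1 ≤ z then
        BN R n1 (x - n1) (z - n1)
          - ∑ a ∈ Finset.range n1, starRingEnd ℂ (qA R n1 a ⟨x - n1, by omega⟩)
              * ((vq R n1 a)⁻¹ * qA R n1 a ⟨z - n1, by omega⟩)
      else 0)
      + ∑ a ∈ Finset.range n1,
          starRingEnd ℂ (pA R a ⟨x, hx⟩) * ((vp R a)⁻¹ * pA R a ⟨z, hz⟩) := by
  classical
  have hP1 : (∑ y ∈ Finset.range n1,
        starRingEnd ℂ (LpE R n1 y x) * ((vp R (y % n1))⁻¹ * LpE R n1 y z))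
      = ∑ a ∈ Finset.range n1,
          starRingEnd ℂ (pA R a ⟨x, hx⟩) * ((vp R a)⁻¹ * pA R a ⟨z, hz⟩) := by
    refine Finset.sum_congr rfl fun y hy => ?_
    rw [Finset.mem_range] at hy
    rw [LpE_base R n1 hn1 y x hy hx, LpE_base R n1 hn1 y z hy hz, Nat.mod_eq_of_lt hy]
  by_cases hcase : n1 ≤ x ∧ n1 ≤ z
  · obtain ⟨hx1, hz1⟩ := hcase
    have hp : (∑ y ∈ Finset.range N,
          starRingEnd ℂ (LpE R n1 y x) * ((vp R (y % n1))⁻¹ * LpE R n1 y z))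
        = (∑ a ∈ Finset.range n1,
            starRingEnd ℂ (pA R a ⟨x, hx⟩) * ((vp R a)⁻¹ * pA R a ⟨z, hz⟩))
          + ∑ y ∈ Finset.range N,
              starRingEnd ℂ (LpE R n1 y (x - n1)) * ((vp R (y % n1))⁻¹ * LpE R n1 y (z - n1)) := by
      rw [sum_split n1 _ hn, hP1]
      congr 1
      rw [sum_split' n1
        (fun y => starRingEnd ℂ (LpE R n1 y (x - n1)) * ((vp R (y % n1))⁻¹ * LpE R n1 y (z - n1))) hn]
      have hextra : (∑ t ∈ Finset.range n1,
          starRingEnd ℂ (LpE R n1 ((N - n1) + t) (x - n1))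
            * ((vp R (((N - n1) + t) % n1))⁻¹ * LpE R n1 ((N - n1) + t) (z - n1))) = 0 := by
        refine Finset.sum_eq_zero fun t ht => ?_
        rw [LpE_zero_far R n1 hn1 hn _ _ (by omega), map_zero, zero_mul]
      rw [hextra, add_zero]
      refine Finset.sum_congr rfl fun t ht => ?_
      rw [show n1 + t = t + n1 from Nat.add_comm _ _, LpE_shift R n1 hn1 t x hx1,
        LpE_shift R n1 hn1 t z hz1, Nat.add_mod_right]
    have hq : (∑ y ∈ Finset.range N,
          starRingEnd ℂ (LqE R n1 y x) * ((vq R n1 (y % n1))⁻¹ * LqE R n1 y z))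
        = (∑ a ∈ Finset.range n1,
            starRingEnd ℂ (qA R n1 a ⟨x - n1, by omega⟩)
              * ((vq R n1 a)⁻¹ * qA R n1 a ⟨z - n1, by omega⟩))
          + ∑ y ∈ Finset.range N,
              starRingEnd ℂ (LqE R n1 y (x - n1)) * ((vq R n1 (y % n1))⁻¹ * LqE R n1 y (z - n1)) := by
      have hQ1 : (∑ y ∈ Finset.range n1,
          starRingEnd ℂ (LqE R n1 y x) * ((vq R n1 (y % n1))⁻¹ * LqE R n1 y z))
          = ∑ a ∈ Finset.range n1,
            starRingEnd ℂ (qA R n1 a ⟨x - n1, by omega⟩)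
              * ((vq R n1 a)⁻¹ * qA R n1 a ⟨z - n1, by omega⟩) := by
        refine Finset.sum_congr rfl fun y hy => ?_
        rw [Finset.mem_range] at hy
        rw [LqE_base R n1 hn1 hn y x hy hx hx1, LqE_base R n1 hn1 hn y z hy hz hz1,
          Nat.mod_eq_of_lt hy]
      rw [sum_split n1 _ hn, hQ1]
      congr 1
      rw [sum_split' n1
        (fun y => starRingEnd ℂ (LqE R n1 y (x - n1)) * ((vq R n1 (y % n1))⁻¹ * LqE R n1 y (z - n1))) hn]
      have hextra : (∑ t ∈ Finset.range n1,
          starRingEnd ℂ (LqE R n1 ((N - n1) + t) (x - n1))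
            * ((vq R n1 (((N - n1) + t) % n1))⁻¹ * LqE R n1 ((N - n1) + t) (z - n1))) = 0 := by
        refine Finset.sum_eq_zero fun t ht => ?_
        rw [LqE_zero_far R n1 _ _ (by omega), map_zero, zero_mul]
      rw [hextra, add_zero]
      refine Finset.sum_congr rfl fun t ht => ?_
      rw [show n1 + t = t + n1 from Nat.add_comm _ _, LqE_shift R n1 hn1 t x hx1,
        LqE_shift R n1 hn1 t z hz1, Nat.add_mod_right]
    rw [BN, hp, hq, if_pos ⟨hx1, hz1⟩, BN]
    ring
  · have hp : (∑ y ∈ Finset.range N,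
          starRingEnd ℂ (LpE R n1 y x) * ((vp R (y % n1))⁻¹ * LpE R n1 y z))
        = ∑ a ∈ Finset.range n1,
            starRingEnd ℂ (pA R a ⟨x, hx⟩) * ((vp R a)⁻¹ * pA R a ⟨z, hz⟩) := by
      rw [sum_split n1 _ hn, hP1]
      have hextra : (∑ t ∈ Finset.range (N - n1),
          starRingEnd ℂ (LpE R n1 (n1 + t) x) * ((vp R ((n1 + t) % n1))⁻¹ * LpE R n1 (n1 + t) z)) = 0 := by
        refine Finset.sum_eq_zero fun t ht => ?_
        rcases Nat.lt_or_ge x n1 with hxlt | hxge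
        · rw [LpE_high_zero R n1 hn1 (n1 + t) x (by omega) hxlt, map_zero, zero_mul]
        · have hzlt : z < n1 := by
            rcases Nat.lt_or_ge z n1 with h | h
            · exact h
            · exact absurd ⟨hxge, h⟩ hcase
          rw [LpE_high_zero R n1 hn1 (n1 + t) z (by omega) hzlt, mul_zero, mul_zero]
      rw [hextra, add_zero]
    have hq : (∑ y ∈ Finset.range N,
          starRingEnd ℂ (LqE R n1 y x) * ((vq R n1 (y % n1))⁻¹ * LqE R n1 y z)) = 0 := by
      refine Finset.sum_eq_zero fun y hy => ?_
      rcases Nat.lt_or_ge x n1 with hxlt | hxge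
      · rw [LqE_lo_zero R n1 hn1 y x hxlt, map_zero, zero_mul]
      · have hzlt : z < n1 := by
          rcases Nat.lt_or_ge z n1 with h | h
          · exact h
          · exact absurd ⟨hxge, h⟩ hcase
        rw [LqE_lo_zero R n1 hn1 y z hzlt, mul_zero, mul_zero]
    rw [BN, hp, hq, if_neg hcase]
    ring

lemma BN_eq_inv (hR : R.PosDef) (hH : Rᴴ = R) (hn1 : 0 < n1) (hn : n1 ≤ N)
    (hBT : ∀ (i j : ℕ) (hi : i + n1 < N) (hj : j + n1 < N),
      R ⟨i + n1, hi⟩ ⟨j + n1, hj⟩ =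
        R ⟨i, Nat.lt_of_le_of_lt (Nat.le_add_right i n1) hi⟩
          ⟨j, Nat.lt_of_le_of_lt (Nat.le_add_right j n1) hj⟩) :
    ∀ x, ∀ (hx : x < N), ∀ z, ∀ (hz : z < N),
      BN R n1 x z = R⁻¹ ⟨x, hx⟩ ⟨z, hz⟩ := by
  intro x
  induction x using Nat.strong_induction_on with
  | _ x IH =>
  intro hx z hz
  rw [BN_rec R n1 hn1 hn x z hx hz]
  have hdisp := displacement R n1 hR hH hn1 hn hBT ⟨x, hx⟩ ⟨z, hz⟩
  rw [hdisp]
  by_cases hcase : n1 ≤ x ∧ n1 ≤ z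
  · rw [if_pos hcase, if_pos hcase, IH (x - n1) (by omega) (by omega) (z - n1) (by omega)]
  · rw [if_neg hcase, if_neg hcase]

end BezAux


/-- Bezoutian inversion formula: `R⁻¹ = L_pᴴ D(V'⁻¹) L_p − L_qᴴ D(V⁻¹) L_q`, where `L_p` is
the block upper-triangular block-Toeplitz matrix with `(s,t)` block `P_{t-s}ᵀ` (for `t ≥ s`),
`L_q` the strictly block upper-triangular one with `(s,t)` block `Q_{n2-(t-s)}ᵀ` (for `t > s`),
`P_t` (resp. `Q_{n2-1-t}`) being the `t`-th block row of
`[p_{0,N-1}, …, p_{n1-1,N-1}]` (resp. `[q_{0,N-n1}, …, q_{0,N-1}]`), `V'` the diagonal matrix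
of the `v'_{k,N-1}` and `V` the diagonal matrix of the `v_{0,N-n1+k}`, `k = 0, …, n1-1`, and
`D(M)` the block diagonal matrix repeating `M`. -/
theorem stmt14 (n1 n2 : ℕ) (h1 : 1 ≤ n1) (h2 : 1 ≤ n2)
    (R : Matrix (Fin (n1 * n2)) (Fin (n1 * n2)) ℂ) (hR : R.PosDef)
    (hBT : ∀ (i j : ℕ) (hi : i + n1 < n1 * n2) (hj : j + n1 < n1 * n2),
      R ⟨i + n1, hi⟩ ⟨j + n1, hj⟩ =
        R ⟨i, Nat.lt_of_le_of_lt (Nat.le_add_right i n1) hi⟩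
          ⟨j, Nat.lt_of_le_of_lt (Nat.le_add_right j n1) hj⟩) :
    let N := n1 * n2
    let Lp : Matrix (Fin N) (Fin N) ℂ := Matrix.of fun i j =>
      if (i : ℕ) / n1 ≤ (j : ℕ) / n1 then
        pCoord R ((i : ℕ) % n1) (N - 1)
          (((j : ℕ) / n1 - (i : ℕ) / n1) * n1 + (j : ℕ) % n1)
      else 0
    let Lq : Matrix (Fin N) (Fin N) ℂ := Matrix.of fun i j =>
      if (i : ℕ) / n1 < (j : ℕ) / n1 then
        qCoord R 0 (N - n1 + (i : ℕ) % n1)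
          (((j : ℕ) / n1 - (i : ℕ) / n1 - 1) * n1 + (j : ℕ) % n1)
      else 0
    let V' : Matrix (Fin n1) (Fin n1) ℂ := Matrix.diagonal fun k => vSc' R (k : ℕ) (N - 1)
    let V : Matrix (Fin n1) (Fin n1) ℂ := Matrix.diagonal fun k => vSc R 0 (N - n1 + (k : ℕ))
    let DVp : Matrix (Fin N) (Fin N) ℂ := Matrix.of fun i j =>
      if (i : ℕ) / n1 = (j : ℕ) / n1 then matExt V'⁻¹ ((i : ℕ) % n1) ((j : ℕ) % n1) else 0
    let DVq : Matrix (Fin N) (Fin N) ℂ := Matrix.of fun i j =>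
      if (i : ℕ) / n1 = (j : ℕ) / n1 then matExt V⁻¹ ((i : ℕ) % n1) ((j : ℕ) % n1) else 0
    R⁻¹ = Lpᴴ * DVp * Lp - Lqᴴ * DVq * Lq := by
  intro N Lp Lq V' V DVp DVq
  have hH : Rᴴ = R := hR.1
  have hn1 : 0 < n1 := h1
  have hn : n1 ≤ N := by
    show n1 ≤ n1 * n2
    calc n1 = n1 * 1 := (Nat.mul_one n1).symm
      _ ≤ n1 * n2 := Nat.mul_le_mul_left n1 h2
  have hV' : V'⁻¹ = Matrix.diagonal (fun k : Fin n1 => (BezAux.vp R (k : ℕ))⁻¹) := by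
    apply Matrix.inv_eq_right_inv
    show Matrix.diagonal _ * Matrix.diagonal _ = 1
    rw [Matrix.diagonal_mul_diagonal, ← Matrix.diagonal_one]
    exact congrArg Matrix.diagonal (funext fun k =>
      mul_inv_cancel₀ (BezAux.vp_ne R hR (k : ℕ) (lt_of_lt_of_le k.isLt hn)))
  have hV : V⁻¹ = Matrix.diagonal (fun k : Fin n1 => (BezAux.vq R n1 (k : ℕ))⁻¹) := by
    apply Matrix.inv_eq_right_inv
    show Matrix.diagonal _ * Matrix.diagonal _ = 1
    rw [Matrix.diagonal_mul_diagonal, ← Matrix.diagonal_one]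
    exact congrArg Matrix.diagonal (funext fun k =>
      mul_inv_cancel₀ (BezAux.vq_ne R n1 hR hn (k : ℕ) k.isLt))
  have hDVp : ∀ y w : Fin N, DVp y w
      = if y = w then (BezAux.vp R ((y : ℕ) % n1))⁻¹ else 0 := by
    intro y w
    have hbody : DVp y w = if (y : ℕ) / n1 = (w : ℕ) / n1 then
        matExt V'⁻¹ ((y : ℕ) % n1) ((w : ℕ) % n1) else 0 := rfl
    rw [hbody, hV']
    by_cases hyw : y = w
    · subst hyw
      rw [if_pos rfl, if_pos rfl, matExt,
        dif_pos ⟨Nat.mod_lt _ hn1, Nat.mod_lt _ hn1⟩, Matrix.diagonal_apply_eq]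
    · rw [if_neg hyw]
      by_cases hdiv : (y : ℕ) / n1 = (w : ℕ) / n1
      · rw [if_pos hdiv, matExt, dif_pos ⟨Nat.mod_lt _ hn1, Nat.mod_lt _ hn1⟩,
          Matrix.diagonal_apply_ne]
        intro hc
        apply hyw
        have hmod : (y : ℕ) % n1 = (w : ℕ) % n1 := congrArg Fin.val hc
        have hy2 := Nat.div_add_mod' (y : ℕ) n1
        have hw2 := Nat.div_add_mod' (w : ℕ) n1
        apply Fin.ext
        rw [← hy2, ← hw2, hdiv, hmod]
      · rw [if_neg hdiv]
  have hDVq : ∀ y w : Fin N, DVq y w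
      = if y = w then (BezAux.vq R n1 ((y : ℕ) % n1))⁻¹ else 0 := by
    intro y w
    have hbody : DVq y w = if (y : ℕ) / n1 = (w : ℕ) / n1 then
        matExt V⁻¹ ((y : ℕ) % n1) ((w : ℕ) % n1) else 0 := rfl
    rw [hbody, hV]
    by_cases hyw : y = w
    · subst hyw
      rw [if_pos rfl, if_pos rfl, matExt,
        dif_pos ⟨Nat.mod_lt _ hn1, Nat.mod_lt _ hn1⟩, Matrix.diagonal_apply_eq]
    · rw [if_neg hyw]
      by_cases hdiv : (y : ℕ) / n1 = (w : ℕ) / n1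
      · rw [if_pos hdiv, matExt, dif_pos ⟨Nat.mod_lt _ hn1, Nat.mod_lt _ hn1⟩,
          Matrix.diagonal_apply_ne]
        intro hc
        apply hyw
        have hmod : (y : ℕ) % n1 = (w : ℕ) % n1 := congrArg Fin.val hc
        have hy2 := Nat.div_add_mod' (y : ℕ) n1
        have hw2 := Nat.div_add_mod' (w : ℕ) n1
        apply Fin.ext
        rw [← hy2, ← hw2, hdiv, hmod]
      · rw [if_neg hdiv]
  have hentryp : ∀ x z : Fin N, (Lpᴴ * DVp * Lp) x z
      = ∑ w : Fin N, starRingEnd ℂ (Lp w x) * ((BezAux.vp R ((w : ℕ) % n1))⁻¹ * Lp w z) := by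
    intro x z
    rw [Matrix.mul_apply]
    refine Finset.sum_congr rfl fun w _ => ?_
    rw [Matrix.mul_apply, Finset.sum_eq_single w]
    · rw [hDVp w w, if_pos rfl, Matrix.conjTranspose_apply, Complex.star_def]
      ring
    · intro y _ hyne
      rw [hDVp y w, if_neg hyne, mul_zero]
    · intro h
      exact absurd (Finset.mem_univ _) h
  have hentryq : ∀ x z : Fin N, (Lqᴴ * DVq * Lq) x z
      = ∑ w : Fin N, starRingEnd ℂ (Lq w x) * ((BezAux.vq R n1 ((w : ℕ) % n1))⁻¹ * Lq w z) := by
    intro x z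
    rw [Matrix.mul_apply]
    refine Finset.sum_congr rfl fun w _ => ?_
    rw [Matrix.mul_apply, Finset.sum_eq_single w]
    · rw [hDVq w w, if_pos rfl, Matrix.conjTranspose_apply, Complex.star_def]
      ring
    · intro y _ hyne
      rw [hDVq y w, if_neg hyne, mul_zero]
    · intro h
      exact absurd (Finset.mem_univ _) h
  ext x z
  rw [Matrix.sub_apply, hentryp x z, hentryq x z]
  have hsump : (∑ w : Fin N, starRingEnd ℂ (Lp w x) * ((BezAux.vp R ((w : ℕ) % n1))⁻¹ * Lp w z))
      = ∑ y ∈ Finset.range N,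
          starRingEnd ℂ (BezAux.LpE R n1 y (x : ℕ))
            * ((BezAux.vp R (y % n1))⁻¹ * BezAux.LpE R n1 y (z : ℕ)) :=
    Fin.sum_univ_eq_sum_range
      (fun y : ℕ => starRingEnd ℂ (BezAux.LpE R n1 y (x : ℕ))
        * ((BezAux.vp R (y % n1))⁻¹ * BezAux.LpE R n1 y (z : ℕ))) N
  have hsumq : (∑ w : Fin N, starRingEnd ℂ (Lq w x) * ((BezAux.vq R n1 ((w : ℕ) % n1))⁻¹ * Lq w z))
      = ∑ y ∈ Finset.range N,
          starRingEnd ℂ (BezAux.LqE R n1 y (x : ℕ))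
            * ((BezAux.vq R n1 (y % n1))⁻¹ * BezAux.LqE R n1 y (z : ℕ)) :=
    Fin.sum_univ_eq_sum_range
      (fun y : ℕ => starRingEnd ℂ (BezAux.LqE R n1 y (x : ℕ))
        * ((BezAux.vq R n1 (y % n1))⁻¹ * BezAux.LqE R n1 y (z : ℕ))) N
  rw [hsump, hsumq]
  have hfin : BezAux.BN R n1 (x : ℕ) (z : ℕ) = R⁻¹ ⟨(x : ℕ), x.isLt⟩ ⟨(z : ℕ), z.isLt⟩ :=
    BezAux.BN_eq_inv R n1 hR hH hn1 hn hBT (x : ℕ) x.isLt (z : ℕ) z.isLt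
  rw [BezAux.BN] at hfin
  rw [hfin]
end
end

section
/- (Identification of the forward Whittle–Wiggins–Robinson solution) Let R be an N×N Hermitian positive definite matrix that is block Toeplitz with block size n1. Define the N×n1 matrix P := [p_{0,N−1}, p_{1,N−1}, …, p_{n1−1,N−1}], partitioned into n1×n1 block rows P = [P_0; P_1; …; P_{n2−1}], and let V' be the n1×n1 diagonal matrix with diagonal entries v'_{0,N−1}, …, v'_{n1−1,N−1}. Suppose n1×n1 complex matrices A_1, …, A_{n2−1} and P_f satisfy the block equation [I, A_1, …, A_{n2−1}] · R = [P_f, 0, …, 0]. Then P_0ᵀ is invertible, A_i = (P_0ᵀ)⁻¹ P_iᵀ for each i = 1, …, n2−1, and P_f = (P_0ᵀ)⁻¹ V' (P_0*)⁻¹, where * denotes entrywise complex conjugation. -/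
open Matrix
open scoped ComplexOrder

noncomputable section

/-- The `t`-th `n1 × n1` block row `P_t` of the `N × n1` matrix
`P = [p_{0,N-1}, …, p_{n1-1,N-1}]`. -/
def PBlock (n1 n2 : ℕ) (R : Matrix (Fin (n1 * n2)) (Fin (n1 * n2)) ℂ) (t : ℕ) :
    Matrix (Fin n1) (Fin n1) ℂ :=
  Matrix.of fun u k => pCoord R (k : ℕ) (n1 * n2 - 1) (t * n1 + (u : ℕ))

section Helpers

variable {n : ℕ} {R : Matrix (Fin n) (Fin n) ℂ}

lemma pqAux_succ (d k : ℕ) : pqAux R (d+1) k =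
    ((pqAux R d k).1 - (bform R (pqAux R d k).1 (eVec n (k+d+1)) / bform R (pqAux R d (k+1)).2 (eVec n (k+d+1))) • (pqAux R d (k+1)).2,
     (pqAux R d (k+1)).2 - (bform R (pqAux R d (k+1)).2 (eVec n k) / bform R (pqAux R d k).1 (eVec n k)) • (pqAux R d k).1) := rfl

lemma bform_eVec (v : Fin n → ℂ) (j : Fin n) :
    bform R v (eVec n (j : ℕ)) = ∑ i, v i * R i j := by
  unfold bform eVec Matrix.mulVec dotProduct
  simp [Fin.val_eq_val, mul_ite, Finset.sum_ite_eq']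

lemma bform_expand (v w : Fin n → ℂ) :
    bform R v w = ∑ j, w j * bform R v (eVec n (j : ℕ)) := by
  simp only [bform_eVec]
  unfold bform Matrix.mulVec dotProduct
  simp only [Finset.mul_sum]
  rw [Finset.sum_comm]
  congr 1; funext i
  congr 1; funext j
  ring

lemma bform_star_pos (hR : R.PosDef) (v : Fin n → ℂ) (hv : v ≠ 0) :
    0 < bform R v (star v) := by
  have h := hR.dotProduct_mulVec_pos (show star v ≠ 0 by simpa using hv)
  simpa [bform, dotProduct] using h

lemma bform_linear_left (v w u : Fin n → ℂ) (c : ℂ) :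
    bform R (v - c • w) u = bform R v u - c * bform R w u := by
  unfold bform
  simp [sub_dotProduct, smul_dotProduct, smul_eq_mul]

/-- If every coordinate of `v` is zero or orthogonal direction, then `v = 0`. -/
lemma eq_zero_of_bform (hR : R.PosDef) (v : Fin n → ℂ)
    (h : ∀ j : Fin n, v j = 0 ∨ bform R v (eVec n (j : ℕ)) = 0) : v = 0 := by
  by_contra hv
  have hpos := bform_star_pos hR v hv
  have hzero : bform R v (star v) = 0 := by
    rw [bform_expand]
    refine Finset.sum_eq_zero fun j _ => ?_
    rcases h j with h' | h' <;> simp [h', Pi.star_apply]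
  rw [hzero] at hpos
  exact lt_irrefl _ hpos

lemma bform_diag_ne (hR : R.PosDef) (v : Fin n → ℂ) (l : Fin n) (hvl : v l = 1)
    (h0 : ∀ j : Fin n, j ≠ l → v j = 0 ∨ bform R v (eVec n (j:ℕ)) = 0) :
    bform R v (eVec n (l:ℕ)) ≠ 0 := by
  intro h
  have hv : v ≠ 0 := by
    intro hv; rw [hv] at hvl; simp at hvl
  have hpos := bform_star_pos hR v hv
  have hzero : bform R v (star v) = 0 := by
    rw [bform_expand]
    refine Finset.sum_eq_zero fun j _ => ?_
    by_cases hj : j = l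
    · subst hj; rw [h, mul_zero]
    · rcases h0 j hj with h' | h' <;> simp [h', Pi.star_apply]
  rw [hzero] at hpos
  exact lt_irrefl _ hpos

lemma pq_props (hR : R.PosDef) :
    ∀ d k, k + d < n →
      (∀ hk : k < n, (pqAux R d k).1 ⟨k, hk⟩ = 1) ∧
      (∀ j : Fin n, ((j:ℕ) < k ∨ k + d < (j:ℕ)) → (pqAux R d k).1 j = 0) ∧
      (∀ hl : k + d < n, (pqAux R d k).2 ⟨k + d, hl⟩ = 1) ∧
      (∀ j : Fin n, ((j:ℕ) < k ∨ k + d < (j:ℕ)) → (pqAux R d k).2 j = 0) ∧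
      (∀ j : Fin n, k < (j:ℕ) → (j:ℕ) ≤ k + d → bform R (pqAux R d k).1 (eVec n (j:ℕ)) = 0) ∧
      (∀ j : Fin n, k ≤ (j:ℕ) → (j:ℕ) < k + d → bform R (pqAux R d k).2 (eVec n (j:ℕ)) = 0) := by
  intro d
  induction d with
  | zero =>
    intro k hk
    refine ⟨fun hk' => ?_, fun j hj => ?_, fun hl => ?_, fun j hj => ?_,
      fun j h1 h2 => by omega, fun j h1 h2 => by omega⟩
    · simp [pqAux, eVec]
    · simp only [pqAux, eVec]; rw [if_neg]; omega
    · simp [pqAux, eVec]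
    · simp only [pqAux, eVec]; rw [if_neg]; omega
  | succ d ih =>
    intro k hk
    obtain ⟨hp1, hp0, -, -, hpo, -⟩ := ih k (by omega)
    obtain ⟨-, -, hq1', hq0', -, hqo'⟩ := ih (k+1) (by omega)
    set p0 := (pqAux R d k).1 with hp0def
    set q1 := (pqAux R d (k+1)).2 with hq1def
    have hln : k + d + 1 < n := by omega
    have hkn : k < n := by omega
    have hq1l : q1 ⟨k + d + 1, hln⟩ = 1 := by
      have h := hq1' (by omega)
      have he : (⟨k + d + 1, hln⟩ : Fin n) = ⟨k + 1 + d, by omega⟩ := by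
        apply Fin.ext; simp; omega
      rw [he]; exact h
    have hvne : bform R q1 (eVec n (k + d + 1)) ≠ 0 := by
      have h := bform_diag_ne hR q1 ⟨k + d + 1, hln⟩ hq1l ?_
      · simpa using h
      · intro j hj
        have hjv : (j:ℕ) ≠ k + d + 1 := fun h => hj (Fin.ext h)
        by_cases hjs : (j:ℕ) < k + 1 ∨ k + 1 + d < (j:ℕ)
        · exact Or.inl (hq0' j hjs)
        · exact Or.inr (hqo' j (by omega) (by omega))
    have hv'ne : bform R p0 (eVec n k) ≠ 0 := by
      have h := bform_diag_ne hR p0 ⟨k, hkn⟩ (hp1 hkn) ?_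
      · simpa using h
      · intro j hj
        have hjv : (j:ℕ) ≠ k := fun h => hj (Fin.ext h)
        by_cases hjs : (j:ℕ) < k ∨ k + d < (j:ℕ)
        · exact Or.inl (hp0 j hjs)
        · exact Or.inr (hpo j (by omega) (by omega))
    simp only [pqAux_succ]
    set a := bform R p0 (eVec n (k + d + 1)) / bform R q1 (eVec n (k + d + 1)) with hadef
    set a' := bform R q1 (eVec n k) / bform R p0 (eVec n k) with ha'def
    refine ⟨fun hk' => ?_, fun j hj => ?_, fun hl => ?_, fun j hj => ?_,
      fun j h1 h2 => ?_, fun j h1 h2 => ?_⟩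
    · have h1 : p0 ⟨k, hk'⟩ = 1 := hp1 hk'
      have h2 : q1 ⟨k, hk'⟩ = 0 := hq0' ⟨k, hk'⟩ (by simp)
      show p0 ⟨k, hk'⟩ - a * q1 ⟨k, hk'⟩ = 1
      rw [h1, h2]; ring
    · have h1 : p0 j = 0 := hp0 j (by omega)
      have h2 : q1 j = 0 := hq0' j (by omega)
      show p0 j - a * q1 j = 0
      rw [h1, h2]; ring
    · have he : (⟨k + (d+1), hl⟩ : Fin n) = ⟨k + d + 1, hln⟩ := by
        apply Fin.ext; simp; omega
      rw [he]
      have h2 : p0 ⟨k + d + 1, hln⟩ = 0 := hp0 _ (by right; simp)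
      show q1 ⟨k + d + 1, hln⟩ - a' * p0 ⟨k + d + 1, hln⟩ = 1
      rw [hq1l, h2]; ring
    · have h1 : p0 j = 0 := hp0 j (by omega)
      have h2 : q1 j = 0 := hq0' j (by omega)
      show q1 j - a' * p0 j = 0
      rw [h1, h2]; ring
    · rw [bform_linear_left]
      by_cases hjl : (j:ℕ) = k + d + 1
      · rw [hjl, hadef, div_mul_cancel₀ _ hvne, sub_self]
      · rw [hpo j h1 (by omega), hqo' j (by omega) (by omega), mul_zero, sub_zero]
    · rw [bform_linear_left]
      by_cases hjk : (j:ℕ) = k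
      · rw [hjk, ha'def, div_mul_cancel₀ _ hv'ne, sub_self]
      · rw [hqo' j (by omega) (by omega), hpo j (by omega) (by omega), mul_zero, sub_zero]

lemma bform_star_comm (hH : R.IsHermitian) (v w : Fin n → ℂ) :
    bform R v (star w) = starRingEnd ℂ (bform R w (star v)) := by
  unfold bform Matrix.mulVec dotProduct
  simp only [Pi.star_apply, map_sum, Finset.mul_sum]
  rw [Finset.sum_comm]
  apply Finset.sum_congr rfl; intro i _
  apply Finset.sum_congr rfl; intro j _
  have e1 : ((starRingEnd ℂ) (w i)) = star (w i) := rfl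
  have e2 : ((starRingEnd ℂ) (star (v j))) = v j := by simp
  have e3 : ((starRingEnd ℂ) (R i j)) = R j i := hH.apply j i
  rw [_root_.map_mul, _root_.map_mul, e2, e3, e1]
  ring

lemma bform_sum_left {ι : Type*} (s : Finset ι) (c : ι → ℂ) (v : ι → Fin n → ℂ)
    (w : Fin n → ℂ) :
    bform R (fun j => ∑ i ∈ s, c i * v i j) w = ∑ i ∈ s, c i * bform R (v i) w := by
  unfold bform dotProduct
  simp only [Finset.sum_mul, Finset.mul_sum, mul_assoc]
  exact Finset.sum_comm

lemma bform_sum_right {ι : Type*} (s : Finset ι) (c : ι → ℂ) (v : Fin n → ℂ)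
    (w : ι → Fin n → ℂ) :
    bform R v (fun j => ∑ i ∈ s, c i * w i j) = ∑ i ∈ s, c i * bform R v (w i) := by
  calc bform R v (fun j => ∑ i ∈ s, c i * w i j)
      = ∑ j : Fin n, ∑ i ∈ s, (c i * w i j) * bform R v (eVec n (j:ℕ)) := by
        rw [bform_expand]
        apply Finset.sum_congr rfl; intro j _
        rw [Finset.sum_mul]
    _ = ∑ i ∈ s, ∑ j : Fin n, (c i * w i j) * bform R v (eVec n (j:ℕ)) := Finset.sum_comm
    _ = ∑ i ∈ s, c i * bform R v (w i) := by
        apply Finset.sum_congr rfl; intro i _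
        rw [bform_expand v (w i), Finset.mul_sum]
        apply Finset.sum_congr rfl; intro j _
        ring

lemma bform_sub_left (u v w : Fin n → ℂ) :
    bform R (u - v) w = bform R u w - bform R v w := by
  unfold bform
  rw [sub_dotProduct]

end Helpers

/-- Identification of the forward Whittle–Wiggins–Robinson solution: if
`[I, A_1, …, A_{n2-1}] R = [P_f, 0, …, 0]`, then `P_0ᵀ` is invertible,
`A_i = (P_0ᵀ)⁻¹ P_iᵀ`, and `P_f = (P_0ᵀ)⁻¹ V' (P_0*)⁻¹`. -/
theorem stmt15 (n1 n2 : ℕ) (h1 : 1 ≤ n1) (h2 : 1 ≤ n2)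
    (R : Matrix (Fin (n1 * n2)) (Fin (n1 * n2)) ℂ) (hR : R.PosDef)
    (hBT : ∀ (i j : ℕ) (hi : i + n1 < n1 * n2) (hj : j + n1 < n1 * n2),
      R ⟨i + n1, hi⟩ ⟨j + n1, hj⟩ =
        R ⟨i, Nat.lt_of_le_of_lt (Nat.le_add_right i n1) hi⟩
          ⟨j, Nat.lt_of_le_of_lt (Nat.le_add_right j n1) hj⟩)
    (A : ℕ → Matrix (Fin n1) (Fin n1) ℂ) (Pf : Matrix (Fin n1) (Fin n1) ℂ)
    (hA0 : A 0 = 1)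
    (hEq : (Matrix.of fun (a : Fin n1) (j : Fin (n1 * n2)) =>
          A ((j : ℕ) / n1) a ⟨(j : ℕ) % n1, Nat.mod_lt _ h1⟩) * R =
        Matrix.of fun (a : Fin n1) (j : Fin (n1 * n2)) =>
          if (j : ℕ) / n1 = 0 then Pf a ⟨(j : ℕ) % n1, Nat.mod_lt _ h1⟩ else 0) :
    IsUnit (PBlock n1 n2 R 0)ᵀ ∧
    (∀ i : ℕ, 1 ≤ i → i ≤ n2 - 1 →
      A i = (PBlock n1 n2 R 0)ᵀ⁻¹ * (PBlock n1 n2 R i)ᵀ) ∧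
    Pf = (PBlock n1 n2 R 0)ᵀ⁻¹ *
        Matrix.diagonal (fun k : Fin n1 => vSc' R (k : ℕ) (n1 * n2 - 1)) *
        ((PBlock n1 n2 R 0).map (starRingEnd ℂ))⁻¹ := by
  have hn1N : n1 ≤ n1 * n2 := Nat.le_mul_of_pos_right n1 h2
  -- facts about the p-vectors
  have keyfacts : ∀ k : Fin n1,
      (∀ hk : (k:ℕ) < n1*n2, pVec R (k:ℕ) (n1*n2-1) ⟨(k:ℕ), hk⟩ = 1) ∧
      (∀ j : Fin (n1*n2), (j:ℕ) < (k:ℕ) → pVec R (k:ℕ) (n1*n2-1) j = 0) ∧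
      (∀ j : Fin (n1*n2), (k:ℕ) < (j:ℕ) →
        bform R (pVec R (k:ℕ) (n1*n2-1)) (eVec (n1*n2) (j:ℕ)) = 0) := by
    intro k
    have hk := k.2
    have hd : (k:ℕ) + (n1*n2-1 - (k:ℕ)) < n1*n2 := by omega
    obtain ⟨m1, m2, -, -, m5, -⟩ := pq_props hR (n1*n2-1 - (k:ℕ)) (k:ℕ) hd
    exact ⟨fun hk' => m1 hk', fun j hj => m2 j (Or.inl hj),
      fun j hjk => m5 j hjk (by have := j.2; omega)⟩
  have hP0ap : ∀ (u k' : Fin n1), PBlock n1 n2 R 0 u k'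
      = pVec R (k':ℕ) (n1*n2-1) ⟨(u:ℕ), lt_of_lt_of_le u.2 hn1N⟩ := by
    intro u k'
    show pCoord R (k':ℕ) (n1*n2-1) (0*n1 + (u:ℕ)) = _
    have h0 : 0*n1 + (u:ℕ) = (u:ℕ) := by omega
    rw [h0]
    simp only [pCoord]
    rw [dif_pos (lt_of_lt_of_le u.2 hn1N)]
  have htri : (PBlock n1 n2 R 0).BlockTriangular OrderDual.toDual := by
    intro i j hij
    have hij' : i < j := hij
    rw [hP0ap i j]
    exact (keyfacts j).2.1 _ hij'
  have hdet : (PBlock n1 n2 R 0).det = 1 := by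
    rw [Matrix.det_of_lowerTriangular _ htri]
    refine Finset.prod_eq_one fun k _ => ?_
    rw [hP0ap k k]
    exact (keyfacts k).1 _
  have hunitdet : IsUnit (PBlock n1 n2 R 0)ᵀ.det := by
    rw [Matrix.det_transpose, hdet]; exact isUnit_one
  have hunit : IsUnit (PBlock n1 n2 R 0)ᵀ := by
    rw [Matrix.isUnit_iff_isUnit_det]; exact hunitdet
  have hCP : (PBlock n1 n2 R 0)ᵀ⁻¹ * (PBlock n1 n2 R 0)ᵀ = 1 :=
    Matrix.nonsing_inv_mul _ hunitdet
  -- hEq entrywise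
  have hEq' : ∀ (a : Fin n1) (j : Fin (n1*n2)),
      bform R (fun j' => A ((j':ℕ)/n1) a ⟨(j':ℕ)%n1, Nat.mod_lt _ h1⟩)
        (eVec (n1*n2) (j:ℕ)) =
      if (j:ℕ)/n1 = 0 then Pf a ⟨(j:ℕ)%n1, Nat.mod_lt _ h1⟩ else 0 := by
    intro a j
    have h := congrFun (congrFun hEq a) j
    rw [Matrix.mul_apply] at h
    rw [bform_eVec]
    exact h
  have hx_low : ∀ (a : Fin n1) (j : Fin (n1*n2)) (hj : (j:ℕ) < n1),
      A ((j:ℕ)/n1) a ⟨(j:ℕ)%n1, Nat.mod_lt _ h1⟩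
        = if (j:ℕ) = (a:ℕ) then 1 else 0 := by
    intro a j hj
    have hd : (j:ℕ)/n1 = 0 := Nat.div_eq_of_lt hj
    have hm : (⟨(j:ℕ)%n1, Nat.mod_lt _ h1⟩ : Fin n1) = ⟨(j:ℕ), hj⟩ :=
      Fin.ext (Nat.mod_eq_of_lt hj)
    rw [hd, hm, hA0, Matrix.one_apply]
    by_cases hja : (j:ℕ) = (a:ℕ)
    · rw [if_pos (Fin.ext hja.symm), if_pos hja]
    · rw [if_neg (fun h : _ = (⟨(j:ℕ), hj⟩ : Fin n1) => hja ((congrArg Fin.val h).symm)), if_neg hja]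
  have hz_low : ∀ (a : Fin n1) (j : Fin (n1*n2)) (hj : (j:ℕ) < n1),
      (∑ k : Fin n1, (PBlock n1 n2 R 0)ᵀ⁻¹ a k * pVec R (k:ℕ) (n1*n2-1) j)
        = if (j:ℕ) = (a:ℕ) then 1 else 0 := by
    intro a j hj
    have hstep : ∀ k : Fin n1,
        pVec R (k:ℕ) (n1*n2-1) j = (PBlock n1 n2 R 0)ᵀ k ⟨(j:ℕ), hj⟩ := by
      intro k
      rw [Matrix.transpose_apply, hP0ap ⟨(j:ℕ), hj⟩ k]
    calc (∑ k : Fin n1, (PBlock n1 n2 R 0)ᵀ⁻¹ a k * pVec R (k:ℕ) (n1*n2-1) j)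
        = ∑ k : Fin n1, (PBlock n1 n2 R 0)ᵀ⁻¹ a k * (PBlock n1 n2 R 0)ᵀ k ⟨(j:ℕ), hj⟩ := by
          refine Finset.sum_congr rfl fun k _ => ?_
          rw [hstep k]
      _ = ((PBlock n1 n2 R 0)ᵀ⁻¹ * (PBlock n1 n2 R 0)ᵀ) a ⟨(j:ℕ), hj⟩ :=
          (Matrix.mul_apply).symm
      _ = (1 : Matrix (Fin n1) (Fin n1) ℂ) a ⟨(j:ℕ), hj⟩ := by rw [hCP]
      _ = if (j:ℕ) = (a:ℕ) then 1 else 0 := by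
          rw [Matrix.one_apply]
          by_cases hja : (j:ℕ) = (a:ℕ)
          · rw [if_pos (Fin.ext hja.symm), if_pos hja]
          · rw [if_neg (fun h : _ = (⟨(j:ℕ), hj⟩ : Fin n1) => hja ((congrArg Fin.val h).symm)), if_neg hja]
  have hxz : ∀ a : Fin n1,
      (fun j : Fin (n1*n2) => A ((j:ℕ)/n1) a ⟨(j:ℕ)%n1, Nat.mod_lt _ h1⟩)
        = fun j => ∑ k : Fin n1, (PBlock n1 n2 R 0)ᵀ⁻¹ a k * pVec R (k:ℕ) (n1*n2-1) j := by
    intro a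
    have h := eq_zero_of_bform hR
      ((fun j : Fin (n1*n2) => A ((j:ℕ)/n1) a ⟨(j:ℕ)%n1, Nat.mod_lt _ h1⟩)
        - fun j => ∑ k : Fin n1, (PBlock n1 n2 R 0)ᵀ⁻¹ a k * pVec R (k:ℕ) (n1*n2-1) j) ?_
    · funext j
      have := congrFun h j
      simp only [Pi.sub_apply, Pi.zero_apply] at this
      exact sub_eq_zero.mp this
    · intro j
      by_cases hj : (j:ℕ) < n1
      · left
        simp only [Pi.sub_apply]
        rw [hx_low a j hj, hz_low a j hj, sub_self]
      · right
        rw [bform_sub_left]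
        have hbx : bform R (fun j' : Fin (n1*n2) =>
            A ((j':ℕ)/n1) a ⟨(j':ℕ)%n1, Nat.mod_lt _ h1⟩) (eVec (n1*n2) (j:ℕ)) = 0 := by
          rw [hEq' a j, if_neg]
          intro h0
          have h1' : 1 ≤ (j:ℕ)/n1 := (Nat.one_le_div_iff h1).mpr (le_of_not_gt hj)
          omega
        have hbz : bform R (fun j' => ∑ k : Fin n1,
            (PBlock n1 n2 R 0)ᵀ⁻¹ a k * pVec R (k:ℕ) (n1*n2-1) j')
            (eVec (n1*n2) (j:ℕ)) = 0 := by
          rw [bform_sum_left]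
          refine Finset.sum_eq_zero fun k _ => ?_
          rw [(keyfacts k).2.2 j (lt_of_lt_of_le k.2 (le_of_not_gt hj)), mul_zero]
        rw [hbx, hbz, sub_zero]
  refine ⟨hunit, fun i hi1 hi2 => ?_, ?_⟩
  · -- A i identification
    ext a m'
    have hk2 := m'.2
    have hmul : i * n1 ≤ (n2-1) * n1 := Nat.mul_le_mul_right n1 hi2
    have hcomm : (n2-1) * n1 = n1*n2 - n1 := by
      rw [Nat.sub_mul, one_mul, Nat.mul_comm]
    have hlt : i * n1 + (m':ℕ) < n1*n2 := by omega
    have hre : i * n1 + (m':ℕ) = (m':ℕ) + n1 * i := by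
      rw [Nat.add_comm, Nat.mul_comm]
    have hdiv : (i * n1 + (m':ℕ)) / n1 = i := by
      rw [hre, Nat.add_mul_div_left _ _ h1, Nat.div_eq_of_lt hk2, Nat.zero_add]
    have hmod : (i * n1 + (m':ℕ)) % n1 = (m':ℕ) := by
      rw [hre, Nat.add_mul_mod_self_left, Nat.mod_eq_of_lt hk2]
    have hPB : ∀ k : Fin n1, (PBlock n1 n2 R i)ᵀ k m'
        = pVec R (k:ℕ) (n1*n2-1) ⟨i*n1+(m':ℕ), hlt⟩ := by
      intro k
      rw [Matrix.transpose_apply]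
      show pCoord R (k:ℕ) (n1*n2-1) (i*n1 + (m':ℕ)) = _
      simp only [pCoord]
      rw [dif_pos hlt]
    have hAx : A ((i*n1+(m':ℕ))/n1) a ⟨(i*n1+(m':ℕ))%n1, Nat.mod_lt _ h1⟩ = A i a m' := by
      rw [hdiv]
      congr 1
      exact Fin.ext hmod
    calc A i a m'
        = A ((i*n1+(m':ℕ))/n1) a ⟨(i*n1+(m':ℕ))%n1, Nat.mod_lt _ h1⟩ := hAx.symm
      _ = ∑ k : Fin n1, (PBlock n1 n2 R 0)ᵀ⁻¹ a k
            * pVec R (k:ℕ) (n1*n2-1) ⟨i*n1+(m':ℕ), hlt⟩ :=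
          congrFun (hxz a) ⟨i*n1+(m':ℕ), hlt⟩
      _ = ∑ k : Fin n1, (PBlock n1 n2 R 0)ᵀ⁻¹ a k * (PBlock n1 n2 R i)ᵀ k m' := by
          refine Finset.sum_congr rfl fun k _ => ?_
          rw [hPB k]
      _ = ((PBlock n1 n2 R 0)ᵀ⁻¹ * (PBlock n1 n2 R i)ᵀ) a m' := (Matrix.mul_apply).symm
  · -- Pf identification
    have horthp : ∀ k k' : Fin n1,
        bform R (pVec R (k:ℕ) (n1*n2-1)) (star (pVec R (k':ℕ) (n1*n2-1)))
          = if k = k' then vSc' R (k:ℕ) (n1*n2-1) else 0 := by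
      have aux : ∀ k k' : Fin n1, (k:ℕ) ≤ (k':ℕ) →
          bform R (pVec R (k:ℕ) (n1*n2-1)) (star (pVec R (k':ℕ) (n1*n2-1)))
            = if k = k' then vSc' R (k:ℕ) (n1*n2-1) else 0 := by
        intro k k' hkk'
        rw [bform_expand]
        by_cases hke : k = k'
        · subst hke
          rw [if_pos rfl]
          have hkN : (k:ℕ) < n1*n2 := lt_of_lt_of_le k.2 hn1N
          rw [Finset.sum_eq_single (⟨(k:ℕ), hkN⟩ : Fin (n1*n2))]
          · rw [Pi.star_apply, (keyfacts k).1 hkN, star_one, one_mul]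
            rfl
          · intro j _ hj
            have hjk : (j:ℕ) ≠ (k:ℕ) := fun h => hj (Fin.ext h)
            rcases lt_or_gt_of_ne hjk with h | h
            · rw [Pi.star_apply, (keyfacts k).2.1 j h, star_zero, zero_mul]
            · rw [(keyfacts k).2.2 j h, mul_zero]
          · intro h; exact absurd (Finset.mem_univ _) h
        · rw [if_neg hke]
          refine Finset.sum_eq_zero fun j _ => ?_
          have hlt : (k:ℕ) < (k':ℕ) :=
            lt_of_le_of_ne hkk' (fun h => hke (Fin.ext h))
          rcases lt_or_ge (j:ℕ) (k':ℕ) with h | h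
          · rw [Pi.star_apply, (keyfacts k').2.1 j h, star_zero, zero_mul]
          · rw [(keyfacts k).2.2 j (by omega), mul_zero]
      intro k k'
      rcases le_or_gt (k:ℕ) (k':ℕ) with h | h
      · exact aux k k' h
      · have hne : ¬ (k' = k) := fun hh => by
          have := congrArg Fin.val hh; omega
        have hne' : ¬ (k = k') := fun hh => hne hh.symm
        rw [bform_star_comm hR.1, aux k' k (le_of_lt h), if_neg hne, map_zero, if_neg hne']
    have hPf_bform : ∀ a m' : Fin n1, Pf a m' =
        bform R (fun j : Fin (n1*n2) => A ((j:ℕ)/n1) a ⟨(j:ℕ)%n1, Nat.mod_lt _ h1⟩)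
          (star (fun j : Fin (n1*n2) => A ((j:ℕ)/n1) m' ⟨(j:ℕ)%n1, Nat.mod_lt _ h1⟩)) := by
      intro a m'
      have hmN : (m':ℕ) < n1*n2 := lt_of_lt_of_le m'.2 hn1N
      have : bform R (fun j : Fin (n1*n2) => A ((j:ℕ)/n1) a ⟨(j:ℕ)%n1, Nat.mod_lt _ h1⟩)
          (star (fun j : Fin (n1*n2) => A ((j:ℕ)/n1) m' ⟨(j:ℕ)%n1, Nat.mod_lt _ h1⟩))
          = Pf a m' := by
        rw [bform_expand]
        rw [Finset.sum_eq_single (⟨(m':ℕ), hmN⟩ : Fin (n1*n2))]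
        · rw [Pi.star_apply, hx_low m' ⟨(m':ℕ), hmN⟩ m'.2]
          rw [if_pos rfl, star_one, one_mul, hEq' a ⟨(m':ℕ), hmN⟩]
          rw [if_pos (Nat.div_eq_of_lt m'.2)]
          congr 1
          exact Fin.ext (Nat.mod_eq_of_lt m'.2)
        · intro j _ hj
          have hjm : (j:ℕ) ≠ (m':ℕ) := fun h => hj (Fin.ext h)
          by_cases hjn : (j:ℕ) < n1
          · rw [Pi.star_apply, hx_low m' j hjn, if_neg hjm, star_zero, zero_mul]
          · rw [hEq' a j, if_neg, mul_zero]
            intro h0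
            have h1' : 1 ≤ (j:ℕ)/n1 := (Nat.one_le_div_iff h1).mpr (le_of_not_gt hjn)
            omega
        · intro h; exact absurd (Finset.mem_univ _) h
      exact this.symm
    have hPfval : ∀ a m' : Fin n1, Pf a m' =
        ∑ k : Fin n1, (PBlock n1 n2 R 0)ᵀ⁻¹ a k *
          ((starRingEnd ℂ) ((PBlock n1 n2 R 0)ᵀ⁻¹ m' k) * vSc' R (k:ℕ) (n1*n2-1)) := by
      intro a m'
      rw [hPf_bform a m', hxz a, hxz m']
      have hstar : star (fun j : Fin (n1*n2) =>
            ∑ k : Fin n1, (PBlock n1 n2 R 0)ᵀ⁻¹ m' k * pVec R (k:ℕ) (n1*n2-1) j)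
          = fun j => ∑ k : Fin n1, (starRingEnd ℂ) ((PBlock n1 n2 R 0)ᵀ⁻¹ m' k)
              * star (pVec R (k:ℕ) (n1*n2-1)) j := by
        funext j
        simp only [Pi.star_apply, star_sum, star_mul']
        rfl
      rw [hstar, bform_sum_left]
      refine Finset.sum_congr rfl fun k _ => ?_
      rw [bform_sum_right]
      congr 1
      simp only [horthp, mul_ite, mul_zero]
      rw [Finset.sum_ite_eq, if_pos (Finset.mem_univ k)]
    have hEinv : ((PBlock n1 n2 R 0).map (starRingEnd ℂ))⁻¹ = ((PBlock n1 n2 R 0)ᵀ⁻¹)ᴴ := by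
      have hmap : (PBlock n1 n2 R 0).map (starRingEnd ℂ) = ((PBlock n1 n2 R 0)ᵀ)ᴴ := by
        ext i j
        rfl
      rw [hmap, ← Matrix.conjTranspose_nonsing_inv]
    ext a m'
    rw [hPfval a m', hEinv, Matrix.mul_apply]
    refine Finset.sum_congr rfl fun k _ => ?_
    rw [Matrix.mul_diagonal, Matrix.conjTranspose_apply]
    rw [show (star ((PBlock n1 n2 R 0)ᵀ⁻¹ m' k) : ℂ)
      = (starRingEnd ℂ) ((PBlock n1 n2 R 0)ᵀ⁻¹ m' k) from rfl]
    ring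
end
end
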